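/- arXiv:2603.15832 — 7 statements merged into one kernel-verified Lean document; each statement's English description precedes it below -/
import Mathlib

section
/- (Theorem 2'(a): positive correlation with negative externalities favors a quantity ceiling.) There exists q̄ ∈ [0,A] such that, setting q₊*(θ) := min{q^LF(θ), q̄}: for every q ∈ Q, inf over m ∈ M₊ of W⁻(q,m) is at most inf over m ∈ M₊ of W⁻(q₊*, m); moreover, any q ∈ Q attaining this maximal worst-case value satisfies q = q₊* F-almost everywhere, and q₊* coincides with the optimal allocation under the unknown-correlation benchmark (using M₀ in place of M₊). -/
open MeasureTheory Set ENNReal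

noncomputable section

/-- The set of implementable allocation functions: nondecreasing `q : Θ → [0,A]`. -/
def Qset (θlow θhigh A : ℝ) : Set (ℝ → ℝ) :=
  {q | MonotoneOn q (Icc θlow θhigh) ∧ ∀ θ ∈ Icc θlow θhigh, q θ ∈ Icc 0 A}

/-- The unknown-correlation ambiguity set: Borel `m : Θ → [0,∞)` with mean `μ`. -/
def M0 (F : Measure ℝ) (μ : ℝ) : Set (ℝ → ℝ) :=
  {m | Measurable m ∧ (∀ θ, 0 ≤ m θ) ∧ ∫ θ, m θ ∂F = μ}

/-- The positive-correlation ambiguity set: nondecreasing members of `M₀`. -/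
def Mplus (θlow θhigh : ℝ) (F : Measure ℝ) (μ : ℝ) : Set (ℝ → ℝ) :=
  {m ∈ M0 F μ | MonotoneOn m (Icc θlow θhigh)}

/-- Total surplus with a negative externality. -/
def Wneg (F : Measure ℝ) (u : ℝ → ℝ → ℝ) (c : ℝ) (q m : ℝ → ℝ) : ℝ :=
  ∫ θ, (u (q θ) θ - (c + m θ) * q θ) ∂F

/-- Worst-case total surplus (negative externality) over the ambiguity set `M`. -/
def worstNeg (F : Measure ℝ) (u : ℝ → ℝ → ℝ) (c : ℝ) (M : Set (ℝ → ℝ)) (q : ℝ → ℝ) : ℝ :=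
  sInf ((fun m => Wneg F u c q m) '' M)

lemma contOn_extend {X : Type*} [TopologicalSpace X] [NormalSpace X] {s : Set X} (hs : IsClosed s)
    (f : X → ℝ) (hf : ContinuousOn f s) : ∃ g : X → ℝ, Continuous g ∧ ∀ x ∈ s, g x = f x := by
  obtain ⟨g, hg⟩ := (ContinuousMap.mk _ (continuousOn_iff_continuous_restrict.mp hf)).exists_restrict_eq hs
  refine ⟨g, g.continuous, fun x hx => ?_⟩
  have := congrFun (congrArg ContinuousMap.toFun hg) ⟨x, hx⟩
  simpa using this

lemma aux_aemeas {θlow θhigh : ℝ} (hθ : θlow ≤ θhigh) {F : Measure ℝ}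
    (hae : ∀ᵐ θ ∂F, θ ∈ Icc θlow θhigh) {q : ℝ → ℝ} (hq : MonotoneOn q (Icc θlow θhigh)) :
    AEMeasurable q F := by
  have hclmem : ∀ θ, max θlow (min θ θhigh) ∈ Icc θlow θhigh := fun θ =>
    ⟨le_max_left _ _, max_le hθ (min_le_right _ _)⟩
  have hmono : Monotone (fun θ => q (max θlow (min θ θhigh))) := fun a b hab =>
    hq (hclmem a) (hclmem b) (max_le_max le_rfl (min_le_min hab le_rfl))
  exact hmono.measurable.aemeasurable.congr (hae.mono fun θ hθm => by
    show q (max θlow (min θ θhigh)) = q θ; rw [min_eq_left hθm.2, max_eq_right hθm.1])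


variable {θlow θhigh A c μ : ℝ} {F : Measure ℝ}

lemma aux_null (hθ : θlow < θhigh) (f : ℝ → ℝ)
    (hF : F = (volume.restrict (Icc θlow θhigh)).withDensity fun θ => ENNReal.ofReal (f θ)) :
    F (Icc θlow θhigh)ᶜ = 0 ∧ F {θhigh} = 0 := by
  constructor
  · rw [hF, withDensity_apply _ measurableSet_Icc.compl,
      Measure.restrict_restrict measurableSet_Icc.compl]
    rw [compl_inter_self]
    simp
  · rw [hF, withDensity_apply _ (measurableSet_singleton _),
      Measure.restrict_restrict (measurableSet_singleton _)]
    have : volume ({θhigh} ∩ Icc θlow θhigh) = 0 :=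
      measure_mono_null inter_subset_left Real.volume_singleton
    rw [Measure.restrict_eq_zero.mpr this]
    simp

lemma aux_pos (hθ : θlow < θhigh) (f : ℝ → ℝ) (hf_cont : ContinuousOn f (Icc θlow θhigh))
    (hf_pos : ∀ θ ∈ Icc θlow θhigh, 0 < f θ)
    (hF : F = (volume.restrict (Icc θlow θhigh)).withDensity fun θ => ENNReal.ofReal (f θ)) :
    ∀ t ∈ Ico θlow θhigh, 0 < F (Icc t θhigh) := by
  intro t ht
  rw [hF, withDensity_apply _ measurableSet_Icc, Measure.restrict_restrict measurableSet_Icc]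
  have hsub : Icc t θhigh ∩ Icc θlow θhigh = Icc t θhigh :=
    inter_eq_left.mpr (Icc_subset_Icc ht.1 le_rfl)
  rw [hsub]
  obtain ⟨θ0, hθ0mem, hθ0min⟩ := isCompact_Icc.exists_isMinOn (nonempty_Icc.mpr ht.2.le)
    (hf_cont.mono (Icc_subset_Icc ht.1 le_rfl))
  have hεpos : 0 < f θ0 := hf_pos θ0 (Icc_subset_Icc ht.1 le_rfl hθ0mem)
  calc (0:ℝ≥0∞) < ENNReal.ofReal (f θ0) * volume (Icc t θhigh) := by
        apply ENNReal.mul_pos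
        · exact (ENNReal.ofReal_pos.mpr hεpos).ne'
        · rw [Real.volume_Icc]
          exact (ENNReal.ofReal_pos.mpr (by linarith [ht.2])).ne'
    _ = ∫⁻ θ in Icc t θhigh, ENNReal.ofReal (f θ0) ∂volume := by
        rw [setLIntegral_const]
    _ ≤ ∫⁻ θ in Icc t θhigh, ENNReal.ofReal (f θ) ∂volume := by
        apply lintegral_mono_ae
        filter_upwards [ae_restrict_mem measurableSet_Icc] with θ hm
        exact ENNReal.ofReal_le_ofReal (hθ0min hm)


variable {θlow θhigh A c μ : ℝ} {F : Measure ℝ}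

lemma aux_Gint [IsFiniteMeasure F] (hθ : θlow ≤ θhigh)
    (hae : ∀ᵐ θ ∂F, θ ∈ Icc θlow θhigh)
    (U : ℝ × ℝ → ℝ) (hUc : Continuous U)
    {q : ℝ → ℝ} (hq : q ∈ Qset θlow θhigh A) :
    Integrable (fun θ => U (q θ, θ) - c * q θ) F := by
  have haqm : AEMeasurable q F := aux_aemeas hθ hae hq.1
  have hmeas : AEMeasurable (fun θ => U (q θ, θ) - c * q θ) F := by
    have h1 : AEMeasurable (fun θ => (q θ, θ)) F := haqm.prodMk aemeasurable_id
    exact (hUc.measurable.comp_aemeasurable h1).sub (haqm.const_mul c)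
  obtain ⟨CU, hCU⟩ := (isCompact_Icc.prod (isCompact_Icc (a := θlow) (b := θhigh))).exists_bound_of_continuousOn hUc.continuousOn
  refine Integrable.mono' (integrable_const (CU + |c| * A)) hmeas.aestronglyMeasurable ?_
  filter_upwards [hae] with θ hθm
  have hqm := hq.2 θ hθm
  have h1 : ‖U (q θ, θ)‖ ≤ CU := hCU _ (mk_mem_prod hqm hθm)
  have h2 : |c * q θ| ≤ |c| * A := by
    rw [abs_mul]
    have : |q θ| ≤ A := abs_le.mpr ⟨by linarith [hqm.1, hqm.2], hqm.2⟩
    exact mul_le_mul_of_nonneg_left this (abs_nonneg c)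
  calc ‖U (q θ, θ) - c * q θ‖ ≤ ‖U (q θ, θ)‖ + ‖c * q θ‖ := norm_sub_le _ _
    _ ≤ CU + |c| * A := add_le_add h1 h2

lemma aux_worst [IsProbabilityMeasure F] (hθ : θlow < θhigh) (hA : 0 < A) (hμ : 0 < μ)
    (hae : ∀ᵐ θ ∂F, θ ∈ Ico θlow θhigh)
    (hpos : ∀ t ∈ Ico θlow θhigh, 0 < F (Icc t θhigh))
    (u : ℝ → ℝ → ℝ) (U : ℝ × ℝ → ℝ) (hUc : Continuous U)
    (hUeq : ∀ p ∈ Icc 0 A ×ˢ Icc θlow θhigh, U p = u p.1 p.2)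
    {q : ℝ → ℝ} (hq : q ∈ Qset θlow θhigh A)
    {M : Set (ℝ → ℝ)} (h1 : Mplus θlow θhigh F μ ⊆ M) (h2 : M ⊆ M0 F μ) :
    worstNeg F u c M q =
      (∫ θ, (U (q θ, θ) - c * q θ) ∂F) - μ * sSup (q '' Ico θlow θhigh) := by
  have haeIcc : ∀ᵐ θ ∂F, θ ∈ Icc θlow θhigh := hae.mono fun θ h => Ico_subset_Icc_self h
  have haqm : AEMeasurable q F := aux_aemeas hθ.le haeIcc hq.1
  have hGint : Integrable (fun θ => U (q θ, θ) - c * q θ) F := aux_Gint hθ.le haeIcc U hUc hq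
  set S : ℝ := ∫ θ, (U (q θ, θ) - c * q θ) ∂F with hS
  set L : ℝ := sSup (q '' Ico θlow θhigh) with hLdef
  have himg_ne : (q '' Ico θlow θhigh).Nonempty := ⟨q θlow, ⟨θlow, ⟨le_rfl, hθ⟩, rfl⟩⟩
  have hbdd : BddAbove (q '' Ico θlow θhigh) := by
    refine ⟨A, ?_⟩
    rintro y ⟨θ, hθm, rfl⟩
    exact (hq.2 θ (Ico_subset_Icc_self hθm)).2
  have hqleL : ∀ θ ∈ Ico θlow θhigh, q θ ≤ L := fun θ hm => le_csSup hbdd ⟨θ, hm, rfl⟩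
  -- splitting of Wneg for m ∈ M0
  have hsplit : ∀ m ∈ M0 F μ, Integrable m F ∧ Integrable (fun θ => m θ * q θ) F ∧
      Wneg F u c q m = S - ∫ θ, m θ * q θ ∂F := by
    intro m hm
    obtain ⟨hmeas, hm0, hmint⟩ := hm
    have hmInt : Integrable m F := by
      by_contra h
      rw [integral_undef h] at hmint
      exact hμ.ne hmint
    have hmqInt : Integrable (fun θ => m θ * q θ) F := by
      refine Integrable.mono' (hmInt.const_mul A) (hmeas.aemeasurable.mul haqm).aestronglyMeasurable ?_
      filter_upwards [haeIcc] with θ hθm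
      have hqm := hq.2 θ hθm
      rw [Real.norm_eq_abs, abs_mul, abs_of_nonneg (hm0 θ), abs_of_nonneg hqm.1, mul_comm]
      exact mul_le_mul_of_nonneg_right hqm.2 (hm0 θ)
    refine ⟨hmInt, hmqInt, ?_⟩
    have hcong : (fun θ => u (q θ) θ - (c + m θ) * q θ) =ᵐ[F]
        (fun θ => (U (q θ, θ) - c * q θ) - m θ * q θ) := by
      filter_upwards [haeIcc] with θ hθm
      rw [hUeq (q θ, θ) (mk_mem_prod (hq.2 θ hθm) hθm)]
      ring
    rw [Wneg, integral_congr_ae hcong, integral_sub hGint hmqInt]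
  -- lower bound for every element of the image
  have hlow : ∀ y ∈ (fun m => Wneg F u c q m) '' M, S - μ * L ≤ y := by
    rintro y ⟨m, hmM, rfl⟩
    obtain ⟨hmInt, hmqInt, hWm⟩ := hsplit m (h2 hmM)
    obtain ⟨hmeas, hm0, hmint⟩ := h2 hmM
    show S - μ * L ≤ Wneg F u c q m
    rw [hWm]
    have : ∫ θ, m θ * q θ ∂F ≤ μ * L := by
      have hle : (fun θ => m θ * q θ) ≤ᵐ[F] fun θ => m θ * L := by
        filter_upwards [hae] with θ hθm
        exact mul_le_mul_of_nonneg_left (hqleL θ hθm) (hm0 θ)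
      calc ∫ θ, m θ * q θ ∂F ≤ ∫ θ, m θ * L ∂F := integral_mono_ae hmqInt (hmInt.mul_const L) hle
        _ = μ * L := by rw [integral_mul_const, hmint]
    linarith
  have hconst : (fun _ : ℝ => μ) ∈ Mplus θlow θhigh F μ := by
    refine ⟨⟨measurable_const, fun _ => hμ.le, ?_⟩, monotoneOn_const⟩
    simp [measure_univ]
  have hne : ((fun m => Wneg F u c q m) '' M).Nonempty := ⟨_, ⟨_, h1 hconst, rfl⟩⟩
  have hbddB : BddBelow ((fun m => Wneg F u c q m) '' M) := ⟨S - μ * L, hlow⟩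
  refine le_antisymm ?_ (le_csInf hne hlow)
  -- upper bound: sInf ≤ S - μ L
  refine le_of_forall_pos_le_add fun ε hε => ?_
  have hε' : 0 < ε / μ := div_pos hε hμ
  obtain ⟨y, hy_mem, hy⟩ := exists_lt_of_lt_csSup himg_ne (show L - ε / μ < L by linarith)
  obtain ⟨θ0, hθ0mem, rfl⟩ := hy_mem
  have hFt_pos : (0:ℝ≥0∞) < F (Ici θ0) :=
    lt_of_lt_of_le (hpos θ0 hθ0mem) (measure_mono Icc_subset_Ici_self)
  have hFt_top : F (Ici θ0) ≠ ⊤ := measure_ne_top F _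
  set Ft : ℝ := (F (Ici θ0)).toReal with hFt
  have hFt_pos' : 0 < Ft := ENNReal.toReal_pos hFt_pos.ne' hFt_top
  set r : ℝ := μ / Ft with hr
  have hr_pos : 0 < r := div_pos hμ hFt_pos'
  set m0 : ℝ → ℝ := (Ici θ0).indicator (fun _ => r) with hm0def
  have hm0mem : m0 ∈ Mplus θlow θhigh F μ := by
    refine ⟨⟨measurable_const.indicator measurableSet_Ici,
      fun θ => indicator_nonneg (fun _ _ => hr_pos.le) θ, ?_⟩, ?_⟩
    · rw [hm0def, integral_indicator_const _ measurableSet_Ici, smul_eq_mul, measureReal_def, ← hFt, hr]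
      field_simp
    · intro a ha b hb hab
      rw [hm0def]
      by_cases h : θ0 ≤ a
      · rw [indicator_of_mem (mem_Ici.mpr h), indicator_of_mem (mem_Ici.mpr (le_trans h hab))]
      · rw [indicator_of_notMem (fun hh => h (mem_Ici.mp hh))]
        exact indicator_nonneg (fun _ _ => hr_pos.le) b
  obtain ⟨hm0Int, hm0qInt, hWm0⟩ := hsplit m0 (h2 (h1 hm0mem))
  have hkey : μ * q θ0 ≤ ∫ θ, m0 θ * q θ ∂F := by
    have hindInt : Integrable ((Ici θ0).indicator (fun _ => r * q θ0)) F :=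
      (integrable_const (r * q θ0)).indicator measurableSet_Ici
    have hle : (Ici θ0).indicator (fun _ => r * q θ0) ≤ᵐ[F] fun θ => m0 θ * q θ := by
      filter_upwards [hae] with θ hθm
      by_cases h : θ0 ≤ θ
      · rw [indicator_of_mem (mem_Ici.mpr h), hm0def, indicator_of_mem (mem_Ici.mpr h)]
        refine mul_le_mul_of_nonneg_left ?_ hr_pos.le
        exact hq.1 (Ico_subset_Icc_self hθ0mem) (Ico_subset_Icc_self hθm) h
      · rw [indicator_of_notMem (fun hh => h (mem_Ici.mp hh)), hm0def, indicator_of_notMem (fun hh => h (mem_Ici.mp hh)), zero_mul]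
    calc μ * q θ0 = Ft * (r * q θ0) := by rw [hr]; field_simp
      _ = ∫ θ, (Ici θ0).indicator (fun _ => r * q θ0) θ ∂F := by
          rw [integral_indicator_const _ measurableSet_Ici, smul_eq_mul, measureReal_def, ← hFt]
      _ ≤ ∫ θ, m0 θ * q θ ∂F := integral_mono_ae hindInt hm0qInt hle
  have hWle : Wneg F u c q m0 ≤ S - μ * L + ε := by
    rw [hWm0]
    have : μ * (L - ε / μ) ≤ μ * q θ0 := mul_le_mul_of_nonneg_left hy.le hμ.le
    have hμε : μ * (ε / μ) = ε := by field_simp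
    nlinarith [hkey]
  calc sInf ((fun m => Wneg F u c q m) '' M) ≤ Wneg F u c q m0 :=
        csInf_le hbddB ⟨m0, h1 hm0mem, rfl⟩
    _ ≤ S - μ * L + ε := hWle


lemma aux_sSup_min {s : Set ℝ} (hne : s.Nonempty) (hbdd : BddAbove s) (t : ℝ) :
    sSup ((fun x => min x t) '' s) = min (sSup s) t := by
  have hbddi : BddAbove ((fun x => min x t) '' s) := by
    refine ⟨t, ?_⟩
    rintro y ⟨x, hx, rfl⟩
    exact min_le_right _ _
  refine le_antisymm (csSup_le (hne.image _) ?_) (le_of_forall_pos_le_add fun ε hε => ?_)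
  · rintro y ⟨x, hx, rfl⟩
    exact min_le_min (le_csSup hbdd hx) le_rfl
  · obtain ⟨x, hx, hlt⟩ := exists_lt_of_lt_csSup hne (show sSup s - ε < sSup s by linarith)
    have h1 : min (sSup s) t - ε ≤ min x t := by
      rcases le_total x t with h | h
      · rw [min_eq_left h]
        calc min (sSup s) t - ε ≤ sSup s - ε := by
              have := min_le_left (sSup s) t; linarith
          _ ≤ x := hlt.le
      · rw [min_eq_right h]
        have := min_le_right (sSup s) t; linarith
    calc min (sSup s) t ≤ min x t + ε := by linarith
      _ ≤ sSup ((fun x => min x t) '' s) + ε := by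
          have := le_csSup hbddi (mem_image_of_mem _ hx); linarith

lemma aux_wconc {A c : ℝ} {v : ℝ → ℝ} (hconc : StrictConcaveOn ℝ (Icc 0 A) v) :
    StrictConcaveOn ℝ (Icc 0 A) (fun x => v x - c * x) := by
  refine ⟨hconc.1, fun x hx y hy hxy a b ha hb hab => ?_⟩
  have := hconc.2 hx hy hxy ha hb hab
  simp only [smul_eq_mul] at this ⊢
  nlinarith [this]

lemma aux_point_le {A c : ℝ} {v : ℝ → ℝ}
    (hconc : StrictConcaveOn ℝ (Icc 0 A) fun x => v x)
    {a : ℝ} (ha : a ∈ Icc 0 A)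
    (hmax : ∀ x ∈ Icc 0 A, x ≠ a → v x - c * x < v a - c * a)
    {x t : ℝ} (hx : x ∈ Icc 0 A) (hxt : x ≤ t) (ht : 0 ≤ t) :
    v x - c * x ≤ v (min a t) - c * min a t := by
  set w : ℝ → ℝ := fun x => v x - c * x with hw
  have hwconc : StrictConcaveOn ℝ (Icc 0 A) w := aux_wconc hconc
  by_cases hat : a ≤ t
  · rw [min_eq_left hat]
    by_cases hxa : x = a
    · rw [hxa]
    · exact (hmax x hx hxa).le
  · push_neg at hat
    rw [min_eq_right hat.le]
    have htmem : t ∈ Icc 0 A := ⟨ht, le_trans hat.le ha.2⟩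
    by_cases hxt' : x = t
    · rw [hxt']
    · have hxlt : x < t := lt_of_le_of_ne hxt hxt'
      have hxa : x ≠ a := by intro h; rw [h] at hxlt; linarith
      have hwa : w x < w a := hmax x hx hxa
      set lam : ℝ := (a - t) / (a - x) with hlam
      have hax : 0 < a - x := by linarith
      have hlam0 : 0 < lam := div_pos (by linarith) hax
      have hlam1 : 0 < 1 - lam := by
        rw [hlam]
        have : (a - t) / (a - x) < 1 := (div_lt_one hax).mpr (by linarith)
        linarith
      have hcomb : lam • x + (1 - lam) • a = t := by
        simp only [smul_eq_mul, hlam]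
        field_simp
        ring
      have := hwconc.2 hx ha hxa hlam0 hlam1 (by ring)
      rw [hcomb] at this
      simp only [smul_eq_mul] at this
      show w x ≤ w t
      nlinarith [this]


lemma aux_Dmono {θlow θhigh A c : ℝ} (u : ℝ → ℝ → ℝ)
    (hu_sid : ∀ x x' θ θ', 0 ≤ x → x < x' → x' ≤ A →
      θ ∈ Icc θlow θhigh → θ' ∈ Icc θlow θhigh → θ < θ' →
      u x' θ - u x θ < u x' θ' - u x θ')
    (D : ℝ → ℝ → ℝ)
    (hD : ∀ θ ∈ Icc θlow θhigh, D c θ ∈ Icc 0 A ∧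
      ∀ x ∈ Icc 0 A, x ≠ D c θ → u x θ - c * x < u (D c θ) θ - c * D c θ) :
    MonotoneOn (D c) (Icc θlow θhigh) := by
  intro a ha b hb hab
  rcases eq_or_lt_of_le hab with rfl | hlt
  · exact le_rfl
  by_contra hcon
  push_neg at hcon
  obtain ⟨hamem, hamax⟩ := hD a ha
  obtain ⟨hbmem, hbmax⟩ := hD b hb
  have h1 := hbmax (D c a) hamem hcon.ne'
  have h2 := hamax (D c b) hbmem hcon.ne
  have hsid := hu_sid (D c b) (D c a) a b hbmem.1 hcon hamem.2 ha hb hlt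
  linarith

/-- **Theorem 2'(a).** With negative externalities, under the
positive-correlation benchmark there is a quantity ceiling `q̄ ∈ [0,A]` so that
`q₊*(θ) = min (q^LF θ) q̄` maximizes the worst-case total surplus, is the F-a.e. unique
maximizer, and coincides with the optimal allocation under the unknown-correlation
benchmark. -/
theorem positive_correlation_negative_externality_ceiling
    (θlow θhigh A c μ : ℝ) (hθlow : 0 ≤ θlow) (hθ : θlow < θhigh)
    (hA : 0 < A) (hc : 0 < c) (hμ : 0 < μ)
    (F : Measure ℝ) [IsProbabilityMeasure F]
    (f : ℝ → ℝ) (hf_cont : ContinuousOn f (Icc θlow θhigh))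
    (hf_pos : ∀ θ ∈ Icc θlow θhigh, 0 < f θ)
    (hF : F = (volume.restrict (Icc θlow θhigh)).withDensity fun θ => ENNReal.ofReal (f θ))
    (u : ℝ → ℝ → ℝ)
    (hu_cont : ContinuousOn (fun p : ℝ × ℝ => u p.1 p.2) (Icc 0 A ×ˢ Icc θlow θhigh))
    (hu_mono : ∀ θ ∈ Icc θlow θhigh, StrictMonoOn (fun x => u x θ) (Icc 0 A))
    (hu_conc : ∀ θ ∈ Icc θlow θhigh, StrictConcaveOn ℝ (Icc 0 A) fun x => u x θ)
    (hu_sid : ∀ x x' θ θ', 0 ≤ x → x < x' → x' ≤ A →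
      θ ∈ Icc θlow θhigh → θ' ∈ Icc θlow θhigh → θ < θ' →
      u x' θ - u x θ < u x' θ' - u x θ')
    (D : ℝ → ℝ → ℝ)
    (hD : ∀ p : ℝ, ∀ θ ∈ Icc θlow θhigh, D p θ ∈ Icc 0 A ∧
      ∀ x ∈ Icc 0 A, x ≠ D p θ → u x θ - p * x < u (D p θ) θ - p * D p θ) :
    ∃ qc ∈ Icc (0:ℝ) A,
      (∀ q ∈ Qset θlow θhigh A,
        worstNeg F u c (Mplus θlow θhigh F μ) q ≤
          worstNeg F u c (Mplus θlow θhigh F μ) (fun θ => min (D c θ) qc)) ∧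
      (∀ q ∈ Qset θlow θhigh A,
        worstNeg F u c (Mplus θlow θhigh F μ) q =
          worstNeg F u c (Mplus θlow θhigh F μ) (fun θ => min (D c θ) qc) →
        q =ᵐ[F] fun θ => min (D c θ) qc) ∧
      -- the same allocation is optimal under the unknown-correlation benchmark
      (∀ q ∈ Qset θlow θhigh A,
        worstNeg F u c (M0 F μ) q ≤ worstNeg F u c (M0 F μ) (fun θ => min (D c θ) qc)) ∧
      (∀ q ∈ Qset θlow θhigh A,
        worstNeg F u c (M0 F μ) q = worstNeg F u c (M0 F μ) (fun θ => min (D c θ) qc) →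
        q =ᵐ[F] fun θ => min (D c θ) qc) := by
  classical
  obtain ⟨U, hUc, hUeqp⟩ := contOn_extend ((isClosed_Icc).prod isClosed_Icc) _ hu_cont
  obtain ⟨hnull, hsing⟩ := aux_null hθ f hF
  have haeIcc : ∀ᵐ θ ∂F, θ ∈ Icc θlow θhigh := by
    rw [ae_iff]
    convert hnull using 2
    rfl
  have haeIco : ∀ᵐ θ ∂F, θ ∈ Ico θlow θhigh := by
    have h2 : ∀ᵐ θ ∂F, θ ≠ θhigh := by
      rw [ae_iff]
      convert hsing using 2
      ext θ; simp
    filter_upwards [haeIcc, h2] with θ h hne2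
    exact ⟨h.1, lt_of_le_of_ne h.2 hne2⟩
  have hpos := aux_pos hθ f hf_cont hf_pos hF
  have hDmono : MonotoneOn (D c) (Icc θlow θhigh) :=
    aux_Dmono u hu_sid D (fun θ hm => hD c θ hm)
  have hDmem : ∀ θ ∈ Icc θlow θhigh, D c θ ∈ Icc 0 A := fun θ hm => (hD c θ hm).1
  have hQmin : ∀ s : ℝ, 0 ≤ s → (fun θ => min (D c θ) s) ∈ Qset θlow θhigh A := by
    intro s hs
    refine ⟨fun a ha b hb hab => min_le_min (hDmono ha hb hab) le_rfl, fun θ hm => ?_⟩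
    exact ⟨le_min (hDmem θ hm).1 hs, le_trans (min_le_left _ _) (hDmem θ hm).2⟩
  have hIcoNe : (Ico θlow θhigh).Nonempty := ⟨θlow, le_rfl, hθ⟩
  have himgne : (D c '' Ico θlow θhigh).Nonempty := hIcoNe.image _
  have himgbdd : BddAbove (D c '' Ico θlow θhigh) := by
    refine ⟨A, ?_⟩
    rintro y ⟨θ, hm, rfl⟩
    exact (hDmem θ (Ico_subset_Icc_self hm)).2
  have hLmin : ∀ s : ℝ, sSup ((fun θ => min (D c θ) s) '' Ico θlow θhigh) =
      min (sSup (D c '' Ico θlow θhigh)) s := by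
    intro s
    rw [show ((fun θ => min (D c θ) s) '' Ico θlow θhigh) =
      (fun x => min x s) '' (D c '' Ico θlow θhigh) by rw [image_image]]
    exact aux_sSup_min himgne himgbdd s
  -- bound for U on the compact rectangle
  obtain ⟨CU, hCU⟩ := ((isCompact_Icc (a := (0:ℝ)) (b := A)).prod
    (isCompact_Icc (a := θlow) (b := θhigh))).exists_bound_of_continuousOn hUc.continuousOn
  -- the ceiling objective
  have hclcont : Continuous fun s : ℝ => max 0 (min s A) :=
    continuous_const.max (continuous_id.min continuous_const)
  have hclmem : ∀ s : ℝ, max 0 (min s A) ∈ Icc (0:ℝ) A :=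
    fun s => ⟨le_max_left _ _, max_le hA.le (min_le_right _ _)⟩
  have hΦcont : Continuous (fun s : ℝ =>
      (∫ θ, (U (min (D c θ) (max 0 (min s A)), θ) - c * min (D c θ) (max 0 (min s A))) ∂F)
        - μ * min (sSup (D c '' Ico θlow θhigh)) (max 0 (min s A))) := by
    apply Continuous.sub
    · apply continuous_of_dominated (bound := fun _ => CU + |c| * A)
      · intro s
        exact (aux_Gint hθ.le haeIcc U hUc (hQmin _ (hclmem s).1)).1
      · intro s
        filter_upwards [haeIcc] with θ hθm
        have hmem : min (D c θ) (max 0 (min s A)) ∈ Icc 0 A :=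
          (hQmin _ (hclmem s).1).2 θ hθm
        have h1 : ‖U (min (D c θ) (max 0 (min s A)), θ)‖ ≤ CU := hCU _ (mk_mem_prod hmem hθm)
        have h2 : |c * min (D c θ) (max 0 (min s A))| ≤ |c| * A := by
          rw [abs_mul]
          exact mul_le_mul_of_nonneg_left
            (abs_le.mpr ⟨by linarith [hmem.1, hmem.2], hmem.2⟩) (abs_nonneg c)
        calc ‖U (min (D c θ) (max 0 (min s A)), θ) - c * min (D c θ) (max 0 (min s A))‖
            ≤ ‖U (min (D c θ) (max 0 (min s A)), θ)‖ + ‖c * min (D c θ) (max 0 (min s A))‖ :=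
              norm_sub_le _ _
          _ ≤ CU + |c| * A := add_le_add h1 h2
      · exact integrable_const _
      · refine Filter.Eventually.of_forall fun θ => ?_
        have hmin : Continuous fun s : ℝ => min (D c θ) (max 0 (min s A)) :=
          continuous_const.min hclcont
        exact (hUc.comp (hmin.prodMk continuous_const)).sub (continuous_const.mul hmin)
    · exact continuous_const.mul (continuous_const.min hclcont)
  obtain ⟨qbar, hqbarmem, hqbarmax⟩ := isCompact_Icc.exists_isMaxOn
    (nonempty_Icc.mpr hA.le) hΦcont.continuousOn
  have hMpM0 : Mplus θlow θhigh F μ ⊆ M0 F μ := fun m hm => hm.1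
  have hqstarQ : (fun θ => min (D c θ) qbar) ∈ Qset θlow θhigh A := hQmin qbar hqbarmem.1
  have hworstEq : ∀ (M : Set (ℝ → ℝ)), Mplus θlow θhigh F μ ⊆ M → M ⊆ M0 F μ →
      ∀ q ∈ Qset θlow θhigh A, worstNeg F u c M q =
        (∫ θ, (U (q θ, θ) - c * q θ) ∂F) - μ * sSup (q '' Ico θlow θhigh) :=
    fun M h1 h2 q hq => aux_worst hθ hA hμ haeIco hpos u U hUc hUeqp hq h1 h2
  -- main comparison
  have hmain : ∀ q ∈ Qset θlow θhigh A,
      (∫ θ, (U (q θ, θ) - c * q θ) ∂F) - μ * sSup (q '' Ico θlow θhigh) ≤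
      (∫ θ, (U (min (D c θ) qbar, θ) - c * min (D c θ) qbar) ∂F)
        - μ * sSup ((fun θ => min (D c θ) qbar) '' Ico θlow θhigh) := by
    intro q hq
    have hbddq : BddAbove (q '' Ico θlow θhigh) := by
      refine ⟨A, ?_⟩
      rintro y ⟨θ, hm, rfl⟩
      exact (hq.2 θ (Ico_subset_Icc_self hm)).2
    have hneq : (q '' Ico θlow θhigh).Nonempty := hIcoNe.image _
    set Lq : ℝ := sSup (q '' Ico θlow θhigh) with hLqdef
    have hLq0 : 0 ≤ Lq :=
      le_trans (hq.2 θlow ⟨le_rfl, hθ.le⟩).1 (le_csSup hbddq ⟨θlow, ⟨le_rfl, hθ⟩, rfl⟩)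
    have hLqA : Lq ≤ A := csSup_le hneq
      (by rintro y ⟨θ, hm, rfl⟩; exact (hq.2 θ (Ico_subset_Icc_self hm)).2)
    have hstep1 : (∫ θ, (U (q θ, θ) - c * q θ) ∂F) ≤
        ∫ θ, (U (min (D c θ) Lq, θ) - c * min (D c θ) Lq) ∂F := by
      refine integral_mono_ae (aux_Gint hθ.le haeIcc U hUc hq)
        (aux_Gint hθ.le haeIcc U hUc (hQmin Lq hLq0)) ?_
      filter_upwards [haeIco] with θ hm
      have hmIcc : θ ∈ Icc θlow θhigh := Ico_subset_Icc_self hm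
      have h1 : q θ ∈ Icc 0 A := hq.2 θ hmIcc
      have h2 : min (D c θ) Lq ∈ Icc 0 A := (hQmin Lq hLq0).2 θ hmIcc
      have e1 : U (q θ, θ) = u (q θ) θ := hUeqp _ (mk_mem_prod h1 hmIcc)
      have e2 : U (min (D c θ) Lq, θ) = u (min (D c θ) Lq) θ := hUeqp _ (mk_mem_prod h2 hmIcc)
      rw [e1, e2]
      exact aux_point_le (hu_conc θ hmIcc) (hDmem θ hmIcc)
        (fun x hx hnex => (hD c θ hmIcc).2 x hx hnex) h1 (le_csSup hbddq ⟨θ, hm, rfl⟩) hLq0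
    have hcl1 : max 0 (min Lq A) = Lq := by rw [min_eq_left hLqA, max_eq_right hLq0]
    have hcl2 : max 0 (min qbar A) = qbar := by
      rw [min_eq_left hqbarmem.2, max_eq_right hqbarmem.1]
    have hmax := hqbarmax ⟨hLq0, hLqA⟩
    simp only [mem_setOf_eq, hcl1, hcl2] at hmax
    rw [hLmin qbar]
    have hminle : μ * min (sSup (D c '' Ico θlow θhigh)) Lq ≤ μ * Lq :=
      mul_le_mul_of_nonneg_left (min_le_right _ _) hμ.le
    linarith [hstep1, hmax, hminle]
  -- uniqueness
  have huniq : ∀ q ∈ Qset θlow θhigh A,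
      (∫ θ, (U (q θ, θ) - c * q θ) ∂F) - μ * sSup (q '' Ico θlow θhigh) =
      (∫ θ, (U (min (D c θ) qbar, θ) - c * min (D c θ) qbar) ∂F)
        - μ * sSup ((fun θ => min (D c θ) qbar) '' Ico θlow θhigh) →
      q =ᵐ[F] fun θ => min (D c θ) qbar := by
    intro q hq heq
    by_contra hne
    set q2 : ℝ → ℝ := fun θ => (q θ + min (D c θ) qbar) / 2 with hq2def
    have hq2Q : q2 ∈ Qset θlow θhigh A := by
      constructor
      · intro a ha b hb hab
        have h1 := hq.1 ha hb hab
        have h2 : min (D c a) qbar ≤ min (D c b) qbar := hqstarQ.1 ha hb hab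
        simp only [hq2def]
        linarith
      · intro θ hm
        have h1 := hq.2 θ hm
        have h2 : min (D c θ) qbar ∈ Icc 0 A := hqstarQ.2 θ hm
        simp only [hq2def]
        exact ⟨by linarith [h1.1, h2.1], by linarith [h1.2, h2.2]⟩
    have hint1 := aux_Gint (c := c) hθ.le haeIcc U hUc hq
    have hint2 := aux_Gint (c := c) hθ.le haeIcc U hUc hqstarQ
    have hint3 := aux_Gint (c := c) hθ.le haeIcc U hUc hq2Q
    set Dfun : ℝ → ℝ := fun θ => (U (q2 θ, θ) - c * q2 θ) -
      ((U (q θ, θ) - c * q θ) + (U (min (D c θ) qbar, θ) - c * min (D c θ) qbar)) / 2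
      with hDfundef
    have hDint : Integrable Dfun F := hint3.sub ((hint1.add hint2).div_const 2)
    have hD0 : 0 ≤ᵐ[F] Dfun := by
      filter_upwards [haeIcc] with θ hm
      simp only [Pi.zero_apply]
      have h1 : q θ ∈ Icc 0 A := hq.2 θ hm
      have h2 : min (D c θ) qbar ∈ Icc 0 A := hqstarQ.2 θ hm
      have h3 : (q θ + min (D c θ) qbar) / 2 ∈ Icc 0 A := hq2Q.2 θ hm
      have e1 : U (q θ, θ) = u (q θ) θ := hUeqp _ (mk_mem_prod h1 hm)
      have e2 : U (min (D c θ) qbar, θ) = u (min (D c θ) qbar) θ :=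
        hUeqp _ (mk_mem_prod h2 hm)
      have e3 : U ((q θ + min (D c θ) qbar) / 2, θ) = u ((q θ + min (D c θ) qbar) / 2) θ :=
        hUeqp _ (mk_mem_prod h3 hm)
      have hcc := (aux_wconc (c := c) (hu_conc θ hm)).concaveOn
      have hmid := hcc.2 h1 h2 (by norm_num : (0:ℝ) ≤ 1/2) (by norm_num : (0:ℝ) ≤ 1/2)
        (by norm_num : (1:ℝ)/2 + 1/2 = 1)
      simp only [smul_eq_mul] at hmid
      have harg : (1:ℝ)/2 * q θ + 1/2 * min (D c θ) qbar = (q θ + min (D c θ) qbar)/2 := by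
        ring
      rw [harg] at hmid
      simp only [hDfundef, hq2def]
      rw [e1, e2, e3]
      linarith [hmid]
    have hIcoNull : F {θ | θ ∉ Ico θlow θhigh} = 0 := ae_iff.mp haeIco
    have hBne : F {θ | q θ ≠ min (D c θ) qbar} ≠ 0 := fun h => hne (ae_iff.mpr h)
    have hBIco : 0 < F ({θ | q θ ≠ min (D c θ) qbar} ∩ Ico θlow θhigh) := by
      rw [pos_iff_ne_zero]
      intro h0
      apply hBne
      have hsub : {θ | q θ ≠ min (D c θ) qbar} ⊆
          ({θ | q θ ≠ min (D c θ) qbar} ∩ Ico θlow θhigh) ∪ {θ | θ ∉ Ico θlow θhigh} := by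
        intro θ hθm
        by_cases hI : θ ∈ Ico θlow θhigh
        · exact Or.inl ⟨hθm, hI⟩
        · exact Or.inr hI
      exact measure_mono_null hsub (measure_union_null h0 hIcoNull)
    have hsuppsub : {θ | q θ ≠ min (D c θ) qbar} ∩ Ico θlow θhigh ⊆
        Function.support Dfun := by
      rintro θ ⟨hθne, hθI⟩
      have hm : θ ∈ Icc θlow θhigh := Ico_subset_Icc_self hθI
      have h1 : q θ ∈ Icc 0 A := hq.2 θ hm
      have h2 : min (D c θ) qbar ∈ Icc 0 A := hqstarQ.2 θ hm
      have h3 : (q θ + min (D c θ) qbar) / 2 ∈ Icc 0 A := hq2Q.2 θ hm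
      have e1 : U (q θ, θ) = u (q θ) θ := hUeqp _ (mk_mem_prod h1 hm)
      have e2 : U (min (D c θ) qbar, θ) = u (min (D c θ) qbar) θ :=
        hUeqp _ (mk_mem_prod h2 hm)
      have e3 : U ((q θ + min (D c θ) qbar) / 2, θ) = u ((q θ + min (D c θ) qbar) / 2) θ :=
        hUeqp _ (mk_mem_prod h3 hm)
      have hcw := aux_wconc (c := c) (hu_conc θ hm)
      have hmid := hcw.2 h1 h2 hθne (by norm_num : (0:ℝ) < 1/2) (by norm_num : (0:ℝ) < 1/2)
        (by norm_num : (1:ℝ)/2 + 1/2 = 1)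
      simp only [smul_eq_mul] at hmid
      have harg : (1:ℝ)/2 * q θ + 1/2 * min (D c θ) qbar = (q θ + min (D c θ) qbar)/2 := by
        ring
      rw [harg] at hmid
      have hpos' : 0 < Dfun θ := by
        simp only [hDfundef, hq2def]
        rw [e1, e2, e3]
        linarith [hmid]
      exact ne_of_gt hpos'
    have hIpos : 0 < ∫ θ, Dfun θ ∂F :=
      (integral_pos_iff_support_of_nonneg_ae hD0 hDint).mpr
        (lt_of_lt_of_le hBIco (measure_mono hsuppsub))
    have hbddq : BddAbove (q '' Ico θlow θhigh) := by
      refine ⟨A, ?_⟩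
      rintro y ⟨θ, hm, rfl⟩
      exact (hq.2 θ (Ico_subset_Icc_self hm)).2
    have hbdds : BddAbove ((fun θ => min (D c θ) qbar) '' Ico θlow θhigh) := by
      refine ⟨A, ?_⟩
      rintro y ⟨θ, hm, rfl⟩
      exact (hqstarQ.2 θ (Ico_subset_Icc_self hm)).2
    have hLL2 : sSup (q2 '' Ico θlow θhigh) ≤
        (sSup (q '' Ico θlow θhigh) +
          sSup ((fun θ => min (D c θ) qbar) '' Ico θlow θhigh)) / 2 := by
      apply csSup_le (hIcoNe.image _)
      rintro y ⟨θ, hm, rfl⟩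
      have g1 : q θ ≤ sSup (q '' Ico θlow θhigh) := le_csSup hbddq ⟨θ, hm, rfl⟩
      have g2 : min (D c θ) qbar ≤
          sSup ((fun θ => min (D c θ) qbar) '' Ico θlow θhigh) := le_csSup hbdds ⟨θ, hm, rfl⟩
      simp only [hq2def]
      linarith
    have hSS2 : (∫ θ, (U (q2 θ, θ) - c * q2 θ) ∂F) =
        (∫ θ, Dfun θ ∂F) + ((∫ θ, (U (q θ, θ) - c * q θ) ∂F) +
          (∫ θ, (U (min (D c θ) qbar, θ) - c * min (D c θ) qbar) ∂F)) / 2 := by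
      have hfe : (fun θ => U (q2 θ, θ) - c * q2 θ) = fun θ => Dfun θ +
          ((U (q θ, θ) - c * q θ) + (U (min (D c θ) qbar, θ) - c * min (D c θ) qbar)) / 2 := by
        funext θ
        simp only [hDfundef]
        ring
      have hrest : Integrable (fun θ => ((U (q θ, θ) - c * q θ) +
          (U (min (D c θ) qbar, θ) - c * min (D c θ) qbar)) / 2) F :=
        (hint1.add hint2).div_const 2
      have hsum : Integrable (fun θ => (U (q θ, θ) - c * q θ) +
          (U (min (D c θ) qbar, θ) - c * min (D c θ) qbar)) F := hint1.add hint2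
      rw [hfe, integral_add hDint hrest, integral_div, integral_add hint1 hint2]
    have hle2 := hmain q2 hq2Q
    have hmulLL := mul_le_mul_of_nonneg_left hLL2 hμ.le
    linarith [hle2, hIpos, hSS2, heq, hmulLL]
  refine ⟨qbar, hqbarmem, ?_, ?_, ?_, ?_⟩
  · intro q hq
    rw [hworstEq _ subset_rfl hMpM0 q hq, hworstEq _ subset_rfl hMpM0 _ hqstarQ]
    exact hmain q hq
  · intro q hq h
    rw [hworstEq _ subset_rfl hMpM0 q hq, hworstEq _ subset_rfl hMpM0 _ hqstarQ] at h
    exact huniq q hq h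
  · intro q hq
    rw [hworstEq _ hMpM0 subset_rfl q hq, hworstEq _ hMpM0 subset_rfl _ hqstarQ]
    exact hmain q hq
  · intro q hq h
    rw [hworstEq _ hMpM0 subset_rfl q hq, hworstEq _ hMpM0 subset_rfl _ hqstarQ] at h
    exact huniq q hq h
end
end

section
/- (Theorem 2'(b): negative correlation with negative externalities favors a uniform tax.) The allocation q₋*(θ) := D(c + μ, θ) belongs to Q and maximizes the worst-case total surplus under the negative-correlation benchmark: for every q ∈ Q, inf over m ∈ M₋ of W⁻(q,m) is at most inf over m ∈ M₋ of W⁻(q₋*, m); moreover, any q ∈ Q attaining this maximal worst-case value satisfies q = q₋* F-almost everywhere. -/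
open MeasureTheory Set

noncomputable section

/-- The negative-correlation ambiguity set: nonincreasing members of `M₀`. -/
def Mminus (θlow θhigh : ℝ) (F : Measure ℝ) (μ : ℝ) : Set (ℝ → ℝ) :=
  {m ∈ M0 F μ | AntitoneOn m (Icc θlow θhigh)}

/-- **Theorem 2'(b).** With negative externalities, under the
negative-correlation benchmark the allocation `q₋*(θ) = D (c + μ) θ` (a uniform tax `μ`)
belongs to `Q`, maximizes the worst-case total surplus, and is the F-a.e. unique
maximizer. -/
theorem negative_correlation_uniform_tax
    (θlow θhigh A c μ : ℝ) (hθlow : 0 ≤ θlow) (hθ : θlow < θhigh)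
    (hA : 0 < A) (hc : 0 < c) (hμ : 0 < μ)
    (F : Measure ℝ) [IsProbabilityMeasure F]
    (f : ℝ → ℝ) (hf_cont : ContinuousOn f (Icc θlow θhigh))
    (hf_pos : ∀ θ ∈ Icc θlow θhigh, 0 < f θ)
    (hF : F = (volume.restrict (Icc θlow θhigh)).withDensity fun θ => ENNReal.ofReal (f θ))
    (u : ℝ → ℝ → ℝ)
    (hu_cont : ContinuousOn (fun p : ℝ × ℝ => u p.1 p.2) (Icc 0 A ×ˢ Icc θlow θhigh))
    (hu_mono : ∀ θ ∈ Icc θlow θhigh, StrictMonoOn (fun x => u x θ) (Icc 0 A))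
    (hu_conc : ∀ θ ∈ Icc θlow θhigh, StrictConcaveOn ℝ (Icc 0 A) fun x => u x θ)
    (hu_sid : ∀ x x' θ θ', 0 ≤ x → x < x' → x' ≤ A →
      θ ∈ Icc θlow θhigh → θ' ∈ Icc θlow θhigh → θ < θ' →
      u x' θ - u x θ < u x' θ' - u x θ')
    (D : ℝ → ℝ → ℝ)
    (hD : ∀ p : ℝ, ∀ θ ∈ Icc θlow θhigh, D p θ ∈ Icc 0 A ∧
      ∀ x ∈ Icc 0 A, x ≠ D p θ → u x θ - p * x < u (D p θ) θ - p * D p θ) :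
    (fun θ => D (c + μ) θ) ∈ Qset θlow θhigh A ∧
    (∀ q ∈ Qset θlow θhigh A,
      worstNeg F u c (Mminus θlow θhigh F μ) q ≤
        worstNeg F u c (Mminus θlow θhigh F μ) (fun θ => D (c + μ) θ)) ∧
    (∀ q ∈ Qset θlow θhigh A,
      worstNeg F u c (Mminus θlow θhigh F μ) q =
        worstNeg F u c (Mminus θlow θhigh F μ) (fun θ => D (c + μ) θ) →
      q =ᵐ[F] fun θ => D (c + μ) θ) := by
  have hII : θlow ≤ θhigh := hθ.le
  set p : ℝ := c + μ with hp
  set I : Set ℝ := Icc θlow θhigh with hIdef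
  set qs : ℝ → ℝ := fun θ => D p θ with hqsdef
  -- clamp function
  set cl : ℝ → ℝ := fun θ => max θlow (min θ θhigh) with hcldef
  have hcl_mem : ∀ θ, cl θ ∈ I := by
    intro θ
    exact ⟨le_max_left _ _, max_le hII (min_le_right _ _)⟩
  have hcl_mono : Monotone cl := fun a b hab =>
    max_le_max le_rfl (min_le_min hab le_rfl)
  have hcl_meas : Measurable cl := hcl_mono.measurable
  have hcl_eq : ∀ θ ∈ I, cl θ = θ := by
    intro θ hθm
    have h1 : min θ θhigh = θ := min_eq_left hθm.2
    show max θlow (min θ θhigh) = θ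
    rw [h1]
    exact max_eq_right hθm.1
  have hFac : F ≪ volume.restrict I := by
    rw [hF]; exact withDensity_absolutelyContinuous _ _
  have haeI : ∀ᵐ θ ∂F, θ ∈ I := hFac.ae_le (ae_restrict_mem measurableSet_Icc)
  -- properties of qs
  have hqs_range : ∀ θ ∈ I, qs θ ∈ Icc 0 A := fun θ h => (hD p θ h).1
  have hqs_opt : ∀ θ ∈ I, ∀ x ∈ Icc (0:ℝ) A,
      u x θ - p * x ≤ u (qs θ) θ - p * qs θ := by
    intro θ hθm x hx
    rcases eq_or_ne x (qs θ) with h | hne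
    · rw [h]
    · exact ((hD p θ hθm).2 x hx hne).le
  have hqs_mono : MonotoneOn qs I := by
    intro θ₁ h₁ θ₂ h₂ h12
    rcases eq_or_lt_of_le h12 with h | hlt
    · rw [h]
    by_contra hcon
    push_neg at hcon
    have hne1 : qs θ₂ ≠ qs θ₁ := ne_of_lt hcon
    have ha := (hD p θ₁ h₁).2 (qs θ₂) (hqs_range θ₂ h₂) hne1
    have hb := (hD p θ₂ h₂).2 (qs θ₁) (hqs_range θ₁ h₁) hne1.symm
    have hs := hu_sid (qs θ₂) (qs θ₁) θ₁ θ₂ (hqs_range θ₂ h₂).1 hcon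
      (hqs_range θ₁ h₁).2 h₁ h₂ hlt
    linarith
  have hqs_mem : qs ∈ Qset θlow θhigh A := ⟨hqs_mono, hqs_range⟩
  -- bound on u over the compact set
  have hK : IsCompact (Icc (0:ℝ) A ×ˢ I) := isCompact_Icc.prod isCompact_Icc
  obtain ⟨C, hC⟩ := hK.exists_bound_of_continuousOn hu_cont
  -- integrability of members of M0
  have hM0_int : ∀ m ∈ M0 F μ, Integrable m F := by
    intro m hm
    by_contra h
    have h3 := hm.2.2
    rw [MeasureTheory.integral_undef h] at h3
    exact hμ.ne' h3.symm
  -- core integrability and decomposition facts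
  have core : ∀ q ∈ Qset θlow θhigh A, ∀ m : ℝ → ℝ, Measurable m →
      (∀ θ, 0 ≤ m θ) → Integrable m F →
      Integrable (fun θ => q θ) F ∧
      Integrable (fun θ => u (q θ) θ - c * q θ) F ∧
      Integrable (fun θ => m θ * q θ) F ∧
      Integrable (fun θ => u (q θ) θ - (c + m θ) * q θ) F ∧
      Wneg F u c q m
        = ∫ θ, (u (q θ) θ - c * q θ) ∂F - ∫ θ, m θ * q θ ∂F := by
    intro q hq m hmme hm0 hmint
    set qt : ℝ → ℝ := fun θ => q (cl θ) with hqtdef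
    have hqt_mono : Monotone qt := fun a b hab =>
      hq.1 (hcl_mem a) (hcl_mem b) (hcl_mono hab)
    have hqt_meas : Measurable qt := hqt_mono.measurable
    have hqt_range : ∀ θ, qt θ ∈ Icc (0:ℝ) A := fun θ => hq.2 (cl θ) (hcl_mem θ)
    have hqae : q =ᵐ[F] qt := by
      filter_upwards [haeI] with θ hθm
      show q θ = q (cl θ)
      rw [hcl_eq θ hθm]
    have hq_aesm : AEStronglyMeasurable q F :=
      hqt_meas.aestronglyMeasurable.congr hqae.symm
    have hq_int : Integrable (fun θ => q θ) F := by
      refine (integrable_const A).mono' hq_aesm ?_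
      filter_upwards [haeI] with θ hθm
      rw [Real.norm_eq_abs, abs_le]
      exact ⟨by linarith [(hq.2 θ hθm).1], (hq.2 θ hθm).2⟩
    -- the u-composition
    set v : ℝ → ℝ := fun θ => u (qt θ) (cl θ) with hvdef
    have hv_meas : Measurable v := by
      have h1 : Measurable fun θ =>
          (⟨(qt θ, cl θ), ⟨hqt_range θ, hcl_mem θ⟩⟩ : (Icc (0:ℝ) A ×ˢ I)) :=
        Measurable.subtype_mk (hqt_meas.prodMk hcl_meas)
      have h2 : Continuous ((Icc (0:ℝ) A ×ˢ I).restrict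
          (fun z : ℝ × ℝ => u z.1 z.2)) := hu_cont.restrict
      exact h2.measurable.comp h1
    have hv_int : Integrable v F := by
      refine (integrable_const C).mono' hv_meas.aestronglyMeasurable ?_
      refine Filter.Eventually.of_forall fun θ => ?_
      exact hC (qt θ, cl θ) ⟨hqt_range θ, hcl_mem θ⟩
    have huq_ae : (fun θ => u (q θ) θ) =ᵐ[F] v := by
      filter_upwards [haeI] with θ hθm
      show u (q θ) θ = u (q (cl θ)) (cl θ)
      rw [hcl_eq θ hθm]
    have huq_int : Integrable (fun θ => u (q θ) θ) F := hv_int.congr huq_ae.symm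
    have h1 : Integrable (fun θ => u (q θ) θ - c * q θ) F :=
      huq_int.sub (hq_int.const_mul c)
    have hmq_aesm : AEStronglyMeasurable (fun θ => m θ * q θ) F :=
      hmme.aestronglyMeasurable.mul hq_aesm
    have hmq_int : Integrable (fun θ => m θ * q θ) F := by
      refine (hmint.const_mul A).mono' hmq_aesm ?_
      filter_upwards [haeI] with θ hθm
      rw [Real.norm_eq_abs, abs_mul, abs_of_nonneg (hm0 θ)]
      have h0q := (hq.2 θ hθm).1
      have hqA := (hq.2 θ hθm).2
      have : |q θ| = q θ := abs_of_nonneg h0q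
      rw [this]
      nlinarith [hm0 θ]
    have hident : (fun θ => u (q θ) θ - (c + m θ) * q θ)
        = fun θ => (u (q θ) θ - c * q θ) - m θ * q θ := by
      funext θ; ring
    have h3 : Integrable (fun θ => u (q θ) θ - (c + m θ) * q θ) F := by
      rw [hident]; exact h1.sub hmq_int
    refine ⟨hq_int, h1, hmq_int, h3, ?_⟩
    show (∫ θ, (u (q θ) θ - (c + m θ) * q θ) ∂F) = _
    rw [hident, integral_sub h1 hmq_int]
  -- the constant function μ
  set mbar : ℝ → ℝ := fun _ => μ with hmbardef
  have hmbar_meas : Measurable mbar := measurable_const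
  have hmbar_nonneg : ∀ θ, 0 ≤ mbar θ := fun _ => hμ.le
  have hmbar_int : Integrable mbar F := integrable_const μ
  have hmbar_mem : mbar ∈ Mminus θlow θhigh F μ := by
    refine ⟨⟨hmbar_meas, hmbar_nonneg, ?_⟩, fun _ _ _ _ _ => le_refl μ⟩
    simp [hmbardef]
  -- pointwise comparison under mbar
  have hW_mono : ∀ q ∈ Qset θlow θhigh A,
      Wneg F u c q mbar ≤ Wneg F u c qs mbar := by
    intro q hq
    have hcq := core q hq mbar hmbar_meas hmbar_nonneg hmbar_int
    have hcqs := core qs hqs_mem mbar hmbar_meas hmbar_nonneg hmbar_int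
    refine integral_mono_ae hcq.2.2.2.1 hcqs.2.2.2.1 ?_
    filter_upwards [haeI] with θ hθm
    have := hqs_opt θ hθm (q θ) (hq.2 θ hθm)
    show u (q θ) θ - (c + mbar θ) * q θ ≤ u (qs θ) θ - (c + mbar θ) * qs θ
    have hmb : c + mbar θ = p := rfl
    rw [hmb]
    exact this
  -- Chebyshev-type inequality for antitone m against monotone qs
  have cheb : ∀ m ∈ Mminus θlow θhigh F μ,
      ∫ θ, m θ * qs θ ∂F ≤ μ * ∫ θ, qs θ ∂F := by
    intro m hm
    have hmint := hM0_int m hm.1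
    have hcqs := core qs hqs_mem m hm.1.1 hm.1.2.1 hmint
    have i_q := hcqs.1
    have i_mq := hcqs.2.2.1
    obtain ⟨k, hk⟩ : ∃ k, ∀ θ ∈ I, (m θ - μ) * (qs θ - k) ≤ 0 := by
      by_cases hS : {θ | θ ∈ I ∧ μ ≤ m θ}.Nonempty
      · set S : Set ℝ := {θ | θ ∈ I ∧ μ ≤ m θ} with hSdef
        have hSsub : S ⊆ I := fun s hs => hs.1
        have hbdd : BddAbove S := BddAbove.mono hSsub bddAbove_Icc
        obtain ⟨s₀, hs₀⟩ := hS
        have ht1 : θlow ≤ sSup S := le_trans hs₀.1.1 (le_csSup hbdd hs₀)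
        have ht2 : sSup S ≤ θhigh := csSup_le ⟨s₀, hs₀⟩ fun s hs => hs.1.2
        have htI : sSup S ∈ I := ⟨ht1, ht2⟩
        refine ⟨qs (sSup S), fun θ hθm => ?_⟩
        rcases lt_trichotomy θ (sSup S) with hlt | heq | hgt
        · obtain ⟨s, hsS, hθs⟩ := exists_lt_of_lt_csSup ⟨s₀, hs₀⟩ hlt
          have h1 : μ ≤ m θ := le_trans hsS.2 (hm.2 hθm hsS.1 hθs.le)
          have h2 : qs θ ≤ qs (sSup S) := hqs_mono hθm htI hlt.le
          nlinarith
        · rw [heq]; simp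
        · have h1 : m θ < μ := by
            by_contra h
            push_neg at h
            exact absurd (le_csSup hbdd ⟨hθm, h⟩) (not_le.2 hgt)
          have h2 : qs (sSup S) ≤ qs θ := hqs_mono htI hθm hgt.le
          nlinarith
      · refine ⟨qs θlow, fun θ hθm => ?_⟩
        have h1 : ¬ μ ≤ m θ := fun h => hS ⟨θ, hθm, h⟩
        have h2 : qs θlow ≤ qs θ := hqs_mono (left_mem_Icc.2 hII) hθm hθm.1
        nlinarith [not_le.1 h1]
    have hint_le : ∫ θ, (m θ - μ) * (qs θ - k) ∂F ≤ 0 :=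
      integral_nonpos_of_ae (by filter_upwards [haeI] with θ hθm; exact hk θ hθm)
    have hident : (fun θ => (m θ - μ) * (qs θ - k))
        = fun θ => (m θ * qs θ - μ * qs θ) - (k * m θ - k * μ) := by
      funext θ; ring
    rw [hident] at hint_le
    have iA : Integrable (fun θ => m θ * qs θ - μ * qs θ) F :=
      i_mq.sub (i_q.const_mul μ)
    have iB : Integrable (fun θ => k * m θ - k * μ) F :=
      (hmint.const_mul k).sub (integrable_const (k * μ))
    have iC : Integrable (fun θ => μ * qs θ) F := i_q.const_mul μ
    have iD : Integrable (fun θ => k * m θ) F := hmint.const_mul k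
    rw [integral_sub iA iB, integral_sub i_mq iC, integral_sub iD (integrable_const (k * μ)),
      integral_const_mul, integral_const_mul, hm.1.2.2, integral_const] at hint_le
    simp only [measure_univ, probReal_univ, ENNReal.toReal_one, one_smul] at hint_le
    linarith
  -- bounded below
  have hbdd : ∀ q ∈ Qset θlow θhigh A,
      BddBelow ((fun m => Wneg F u c q m) '' Mminus θlow θhigh F μ) := by
    intro q hq
    refine ⟨∫ θ, (u (q θ) θ - c * q θ) ∂F - A * μ, ?_⟩
    rintro x ⟨m, hm, rfl⟩
    have hmint := hM0_int m hm.1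
    obtain ⟨iq, i1, i2, i3, heq⟩ := core q hq m hm.1.1 hm.1.2.1 hmint
    have hle : ∫ θ, m θ * q θ ∂F ≤ A * μ := by
      have hstep : ∫ θ, m θ * q θ ∂F ≤ ∫ θ, A * m θ ∂F := by
        refine integral_mono_ae i2 (hmint.const_mul A) ?_
        filter_upwards [haeI] with θ hθm
        nlinarith [hm.1.2.1 θ, (hq.2 θ hθm).1, (hq.2 θ hθm).2]
      rwa [integral_const_mul, hm.1.2.2] at hstep
    simp only
    rw [heq]
    linarith
  have hmem : ∀ q : ℝ → ℝ, Wneg F u c q mbar ∈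
      (fun m => Wneg F u c q m) '' Mminus θlow θhigh F μ :=
    fun q => ⟨mbar, hmbar_mem, rfl⟩
  -- the worst case for qs is attained at mbar
  have hws : worstNeg F u c (Mminus θlow θhigh F μ) qs = Wneg F u c qs mbar := by
    refine le_antisymm (csInf_le (hbdd qs hqs_mem) (hmem qs)) ?_
    refine le_csInf ⟨_, hmem qs⟩ ?_
    rintro x ⟨m, hm, rfl⟩
    have hmint := hM0_int m hm.1
    obtain ⟨iq, i1, i2, i3, heq⟩ := core qs hqs_mem m hm.1.1 hm.1.2.1 hmint
    obtain ⟨iq', i1', i2', i3', heq'⟩ :=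
      core qs hqs_mem mbar hmbar_meas hmbar_nonneg hmbar_int
    have hmb : ∫ θ, mbar θ * qs θ ∂F = μ * ∫ θ, qs θ ∂F := integral_const_mul μ _
    show Wneg F u c qs mbar ≤ Wneg F u c qs m
    rw [heq, heq', hmb]
    linarith [cheb m hm]
  constructor
  · exact hqs_mem
  constructor
  · intro q hq
    calc worstNeg F u c (Mminus θlow θhigh F μ) q
        ≤ Wneg F u c q mbar := csInf_le (hbdd q hq) (hmem q)
      _ ≤ Wneg F u c qs mbar := hW_mono q hq
      _ = worstNeg F u c (Mminus θlow θhigh F μ) qs := hws.symm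
  · intro q hq heqw
    have h1 : worstNeg F u c (Mminus θlow θhigh F μ) q ≤ Wneg F u c q mbar :=
      csInf_le (hbdd q hq) (hmem q)
    have hEq : Wneg F u c q mbar = Wneg F u c qs mbar := by
      refine le_antisymm (hW_mono q hq) ?_
      rw [← hws, ← heqw]
      exact h1
    obtain ⟨iq, i1, i2, i3, heq⟩ := core q hq mbar hmbar_meas hmbar_nonneg hmbar_int
    obtain ⟨iq', i1', i2', i3', heq'⟩ :=
      core qs hqs_mem mbar hmbar_meas hmbar_nonneg hmbar_int
    have hnn : 0 ≤ᵐ[F] fun θ =>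
        (u (qs θ) θ - (c + mbar θ) * qs θ) - (u (q θ) θ - (c + mbar θ) * q θ) := by
      filter_upwards [haeI] with θ hθm
      have := hqs_opt θ hθm (q θ) (hq.2 θ hθm)
      have hmb : c + mbar θ = p := rfl
      simp only [Pi.zero_apply, hmb]
      linarith
    have hzero : ∫ θ, ((u (qs θ) θ - (c + mbar θ) * qs θ)
        - (u (q θ) θ - (c + mbar θ) * q θ)) ∂F = 0 := by
      rw [integral_sub i3' i3]
      have hq1 : (∫ θ, (u (q θ) θ - (c + mbar θ) * q θ) ∂F) = Wneg F u c q mbar := rfl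
      have hq2 : (∫ θ, (u (qs θ) θ - (c + mbar θ) * qs θ) ∂F) = Wneg F u c qs mbar := rfl
      rw [hq1, hq2, hEq]
      ring
    have hae0 := (integral_eq_zero_iff_of_nonneg_ae hnn (i3'.sub i3)).1 hzero
    filter_upwards [hae0, haeI] with θ h0 hθm
    simp only [Pi.zero_apply] at h0
    by_contra hne
    have hstrict := (hD p θ hθm).2 (q θ) (hq.2 θ hθm) hne
    have hmb : c + mbar θ = p := rfl
    rw [hmb] at h0
    linarith
end
end

section
/- (Proposition 1(a): mandate or no intervention under unknown or negative correlation.) Define q* : Θ → [0,1] by q* ≡ 1 if μ ≥ ∫_Θ max{c − θ, 0} dF(θ), and q*(θ) := 1{θ > c} otherwise. Then for each of the two classes M ∈ {M₀, M₋}: for every q ∈ Q₁, inf over m ∈ M of W₁(q,m) is at most inf over m ∈ M of W₁(q*, m); moreover, if μ ≠ ∫_Θ max{c − θ, 0} dF(θ), any q ∈ Q₁ attaining this maximal worst-case value satisfies q = q* F-almost everywhere. -/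
open MeasureTheory Set

noncomputable section

/-- Unit-demand allocations: nondecreasing `q : Θ → [0,1]`. -/
def Q1 (θlow θhigh : ℝ) : Set (ℝ → ℝ) :=
  {q | MonotoneOn q (Icc θlow θhigh) ∧ ∀ θ ∈ Icc θlow θhigh, q θ ∈ Icc 0 1}

/-- Unit-demand total surplus. -/
def W1 (F : Measure ℝ) (c : ℝ) (q m : ℝ → ℝ) : ℝ :=
  ∫ θ, (θ - c + m θ) * q θ ∂F

/-- Worst-case unit-demand total surplus over the ambiguity set `M`. -/
def worst1 (F : Measure ℝ) (c : ℝ) (M : Set (ℝ → ℝ)) (q : ℝ → ℝ) : ℝ :=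
  sInf ((fun m => W1 F c q m) '' M)

section aux
variable {θlow θhigh : ℝ} {f : ℝ → ℝ} {F : Measure ℝ}


lemma F_compl_null (hF : F = (volume.restrict (Icc θlow θhigh)).withDensity
    fun θ => ENNReal.ofReal (f θ)) : F (Icc θlow θhigh)ᶜ = 0 := by
  subst hF
  rw [withDensity_apply _ (measurableSet_Icc.compl)]
  rw [Measure.restrict_restrict (measurableSet_Icc.compl)]
  simp

lemma F_singleton_null (hF : F = (volume.restrict (Icc θlow θhigh)).withDensity
    fun θ => ENNReal.ofReal (f θ)) (a : ℝ) : F {a} = 0 := by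
  subst hF
  rw [withDensity_apply _ (measurableSet_singleton a)]
  rw [Measure.restrict_restrict (measurableSet_singleton a),
    Measure.restrict_eq_zero.mpr]
  · simp
  · exact measure_mono_null (inter_subset_left) (measure_singleton a)

lemma F_Iic_pos (hθ : θlow < θhigh)
    (hf_cont : ContinuousOn f (Icc θlow θhigh))
    (hf_pos : ∀ θ ∈ Icc θlow θhigh, 0 < f θ)
    (hF : F = (volume.restrict (Icc θlow θhigh)).withDensity
      fun θ => ENNReal.ofReal (f θ))
    {t : ℝ} (ht : t ∈ Ioc θlow θhigh) : 0 < F (Iic t) := by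
  obtain ⟨x, hx, hmin⟩ := (isCompact_Icc (a := θlow) (b := θhigh)).exists_isMinOn
    (nonempty_Icc.mpr hθ.le) hf_cont
  have hε : 0 < f x := hf_pos x hx
  have hsub : Icc θlow t ⊆ Icc θlow θhigh := Icc_subset_Icc le_rfl ht.2
  have : ENNReal.ofReal (f x) * volume (Icc θlow t) ≤ F (Icc θlow t) := by
    subst hF
    rw [withDensity_apply _ measurableSet_Icc,
      Measure.restrict_restrict measurableSet_Icc,
      inter_eq_self_of_subset_left hsub]
    calc ENNReal.ofReal (f x) * volume (Icc θlow t)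
        = ∫⁻ θ in Icc θlow t, ENNReal.ofReal (f x) := by
          rw [setLIntegral_const]
      _ ≤ _ := by
          refine setLIntegral_mono' measurableSet_Icc fun θ hθ' => ?_
          exact ENNReal.ofReal_le_ofReal (hmin (hsub hθ'))
  refine lt_of_lt_of_le (lt_of_lt_of_le ?_ this) (measure_mono Icc_subset_Iic_self)
  rw [Real.volume_Icc]
  exact ENNReal.mul_pos (by simp [hε]) (by simp [ht.1])

end aux


lemma ae_Ioc {θlow θhigh : ℝ} {F : Measure ℝ}
    (hcompl : F (Icc θlow θhigh)ᶜ = 0) (hsing : ∀ a : ℝ, F {a} = 0) :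
    ∀ᵐ θ ∂F, θ ∈ Ioc θlow θhigh := by
  rw [ae_iff]
  refine measure_mono_null (fun x hx => ?_)
    (measure_union_null hcompl (hsing θlow))
  simp only [mem_setOf_eq, mem_Ioc, not_and_or, not_lt, not_le] at hx
  by_cases hxI : x ∈ Icc θlow θhigh
  · rcases hx with h | h
    · exact Or.inr (le_antisymm h hxI.1)
    · exact absurd hxI.2 (not_le.mpr h)
  · exact Or.inl hxI

lemma q_aemeas {θlow θhigh : ℝ} {F : Measure ℝ} (hθ : θlow ≤ θhigh)
    (hcompl : F (Icc θlow θhigh)ᶜ = 0)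
    {q : ℝ → ℝ} (hq : MonotoneOn q (Icc θlow θhigh)) :
    AEStronglyMeasurable q F := by
  set g : ℝ → ℝ := fun θ => q (max θlow (min θ θhigh)) with hg
  have hproj : ∀ θ : ℝ, max θlow (min θ θhigh) ∈ Icc θlow θhigh := fun θ =>
    ⟨le_max_left _ _, max_le hθ (min_le_right _ _)⟩
  have hmono : Monotone g := fun a b hab =>
    hq (hproj a) (hproj b) (max_le_max le_rfl (min_le_min hab le_rfl))
  refine ⟨g, hmono.measurable.stronglyMeasurable, ?_⟩
  refine measure_mono_null (fun x hx => ?_) hcompl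
  simp only [mem_setOf_eq, mem_compl_iff, mem_Icc, not_and_or, not_le] at hx ⊢
  by_contra hxI
  push_neg at hxI
  exact hx (by simp [hg, min_eq_left hxI.2, max_eq_right hxI.1])

theorem worst1_formula
    (θlow θhigh c μ : ℝ) (hθ : θlow < θhigh) (hμ : 0 < μ)
    (F : Measure ℝ) [IsProbabilityMeasure F]
    (hcompl : F (Icc θlow θhigh)ᶜ = 0)
    (hsing : ∀ a : ℝ, F {a} = 0)
    (hIic : ∀ t ∈ Ioc θlow θhigh, 0 < F (Iic t))
    (q : ℝ → ℝ) (hq : q ∈ Q1 θlow θhigh) :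
    worst1 F c (M0 F μ) q
      = (∫ θ, (θ - c) * q θ ∂F) + μ * sInf (q '' Ioc θlow θhigh) ∧
    worst1 F c (Mminus θlow θhigh F μ) q
      = (∫ θ, (θ - c) * q θ ∂F) + μ * sInf (q '' Ioc θlow θhigh) := by
  obtain ⟨hqmono, hq01⟩ := hq
  have hae := ae_Ioc hcompl hsing
  have hqm : AEStronglyMeasurable q F := q_aemeas hθ.le hcompl hqmono
  set B : ℝ := ∫ θ, (θ - c) * q θ ∂F with hB
  set L : ℝ := sInf (q '' Ioc θlow θhigh) with hLdef
  have hIocIcc : Ioc θlow θhigh ⊆ Icc θlow θhigh := Ioc_subset_Icc_self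
  have hbdd : BddBelow (q '' Ioc θlow θhigh) := by
    refine ⟨0, ?_⟩
    rintro x ⟨θ', hθ', rfl⟩
    exact (hq01 θ' (hIocIcc hθ')).1
  have hLle : ∀ θ' ∈ Ioc θlow θhigh, L ≤ q θ' := fun θ' hθ' =>
    csInf_le hbdd (mem_image_of_mem q hθ')
  have hL0 : 0 ≤ L := by
    refine le_csInf ⟨q θhigh, mem_image_of_mem q ⟨hθ, le_rfl⟩⟩ ?_
    rintro x ⟨θ', hθ', rfl⟩
    exact (hq01 θ' (hIocIcc hθ')).1
  have hqae : ∀ᵐ θ' ∂F, θ' ∈ Ioc θlow θhigh ∧ q θ' ∈ Icc (0:ℝ) 1 ∧ L ≤ q θ' :=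
    hae.mono fun θ' hθ' => ⟨hθ', hq01 θ' (hIocIcc hθ'), hLle θ' hθ'⟩
  -- integrability of (θ - c) * q θ
  have hint1 : Integrable (fun θ' => (θ' - c) * q θ') F := by
    refine Integrable.mono' (integrable_const (|θlow| + |θhigh| + |c|))
      ((measurable_id.sub measurable_const).aestronglyMeasurable.mul hqm) ?_
    refine hqae.mono fun θ' ⟨hmem, h01, _⟩ => ?_
    have h1 : |θ'| ≤ |θlow| + |θhigh| := by
      rw [abs_le]
      constructor
      · have := neg_abs_le θlow; have := abs_nonneg θhigh; linarith [hmem.1]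
      · have := le_abs_self θhigh; have := abs_nonneg θlow; linarith [hmem.2]
    rw [Real.norm_eq_abs, abs_mul]
    calc |θ' - c| * |q θ'| ≤ (|θ'| + |c|) * 1 := by
          refine mul_le_mul (abs_sub _ _) ?_ (abs_nonneg _) (by positivity)
          rw [abs_le]; exact ⟨by linarith [h01.1], h01.2⟩
      _ ≤ |θlow| + |θhigh| + |c| := by linarith
  -- every element of M0 is integrable and gives lower bound B + μ * L
  have hlow : ∀ m ∈ M0 F μ, B + μ * L ≤ W1 F c q m := by
    rintro m ⟨hmeas, hnn, hmean⟩
    have hm_int : Integrable m F := by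
      by_contra hni
      rw [integral_undef hni] at hmean
      exact absurd hmean.symm (ne_of_gt hμ)
    have hint2 : Integrable (fun θ' => m θ' * q θ') F := by
      refine Integrable.mono' hm_int (hmeas.aestronglyMeasurable.mul hqm) ?_
      refine hqae.mono fun θ' ⟨_, h01, _⟩ => ?_
      rw [Real.norm_eq_abs, abs_mul, abs_of_nonneg (hnn θ')]
      nlinarith [abs_le.mpr (⟨by linarith [h01.1], h01.2⟩ : -1 ≤ q θ' ∧ q θ' ≤ 1),
        hnn θ', abs_nonneg (q θ')]
    have hW : W1 F c q m = B + ∫ θ', m θ' * q θ' ∂F := by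
      rw [W1, hB, ← integral_add hint1 hint2]
      exact integral_congr_ae (Filter.Eventually.of_forall fun θ' => by ring)
    have hmq : μ * L ≤ ∫ θ', m θ' * q θ' ∂F := by
      have : ∫ θ', L * m θ' ∂F = μ * L := by
        rw [integral_const_mul, hmean]; ring
      rw [← this]
      refine integral_mono_ae (hm_int.const_mul L) hint2 ?_
      refine hqae.mono fun θ' ⟨_, _, hLq⟩ => ?_
      calc L * m θ' = m θ' * L := by ring
        _ ≤ m θ' * q θ' := mul_le_mul_of_nonneg_left hLq (hnn θ')
    linarith [hW ▸ (by linarith : B + μ * L ≤ B + ∫ θ', m θ' * q θ' ∂F)]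
  
  -- membership of constant μ
  have hMsub : Mminus θlow θhigh F μ ⊆ M0 F μ := fun m hm => hm.1
  have hconstM : (fun _ : ℝ => μ) ∈ Mminus θlow θhigh F μ := by
    refine ⟨⟨measurable_const, fun _ => hμ.le, by simp⟩, fun a _ b _ _ => le_rfl⟩
  have hbddM0 : BddBelow ((fun m => W1 F c q m) '' M0 F μ) := by
    refine ⟨B + μ * L, ?_⟩
    rintro x ⟨m, hm, rfl⟩
    exact hlow m hm
  have hbddMm : BddBelow ((fun m => W1 F c q m) '' Mminus θlow θhigh F μ) :=
    hbddM0.mono (image_mono hMsub)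
  have hge0 : B + μ * L ≤ worst1 F c (M0 F μ) q := by
    refine le_csInf ⟨_, mem_image_of_mem _ (hMsub hconstM)⟩ ?_
    rintro x ⟨m, hm, rfl⟩
    exact hlow m hm
  have hgem : B + μ * L ≤ worst1 F c (Mminus θlow θhigh F μ) q := by
    refine le_csInf ⟨_, mem_image_of_mem _ hconstM⟩ ?_
    rintro x ⟨m, hm, rfl⟩
    exact hlow m (hMsub hm)
  -- spike functions
  have hspike : ∀ t ∈ Ioc θlow θhigh,
      ∃ m ∈ Mminus θlow θhigh F μ, W1 F c q m ≤ B + μ * q t := by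
    intro t ht
    have htI : t ∈ Icc θlow θhigh := hIocIcc ht
    have hFt0 : F (Iic t) ≠ 0 := (hIic t ht).ne'
    have hFtT : F (Iic t) ≠ ⊤ := measure_ne_top F _
    have htR : 0 < (F (Iic t)).toReal := ENNReal.toReal_pos hFt0 hFtT
    set C : ℝ := μ / (F (Iic t)).toReal with hC
    have hCpos : 0 < C := div_pos hμ htR
    set m : ℝ → ℝ := fun θ' => C * (Iic t).indicator (fun _ => (1:ℝ)) θ' with hm
    have hmmeas : Measurable m :=
      (measurable_const.indicator measurableSet_Iic).const_mul C
    have hmnn : ∀ θ', 0 ≤ m θ' := fun θ' =>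
      mul_nonneg hCpos.le (indicator_nonneg (fun _ _ => zero_le_one) θ')
    have hmmean : ∫ θ', m θ' ∂F = μ := by
      rw [hm]
      rw [integral_const_mul, integral_indicator_const (1:ℝ) measurableSet_Iic,
        smul_eq_mul, mul_one, hC]
      exact div_mul_cancel₀ μ htR.ne'
    have hmanti : AntitoneOn m (Icc θlow θhigh) := by
      intro a _ b _ hab
      refine mul_le_mul_of_nonneg_left ?_ hCpos.le
      by_cases hbt : b ≤ t
      · simp [indicator_of_mem (mem_Iic.mpr hbt),
          indicator_of_mem (mem_Iic.mpr (hab.trans hbt))]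
      · rw [indicator_of_notMem (by simpa using hbt)]
        exact indicator_nonneg (fun _ _ => zero_le_one) a
    have hmM : m ∈ Mminus θlow θhigh F μ := ⟨⟨hmmeas, hmnn, hmmean⟩, hmanti⟩
    refine ⟨m, hmM, ?_⟩
    -- split W1
    have hint2 : Integrable (fun θ' => m θ' * q θ') F := by
      refine Integrable.mono' (integrable_const C)
        (hmmeas.aestronglyMeasurable.mul hqm) ?_
      refine hqae.mono fun θ' ⟨_, h01, _⟩ => ?_
      rw [Real.norm_eq_abs, abs_mul, abs_of_nonneg (hmnn θ')]
      have hm1 : m θ' ≤ C := by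
        by_cases hmt : θ' ∈ Iic t
        · simp [hm, indicator_of_mem hmt]
        · simp [hm, indicator_of_notMem hmt, hCpos.le]
      have habs : |q θ'| ≤ 1 := abs_le.mpr ⟨by linarith [h01.1], h01.2⟩
      nlinarith [hmnn θ', abs_nonneg (q θ')]
    have hW : W1 F c q m = B + ∫ θ', m θ' * q θ' ∂F := by
      rw [W1, hB, ← integral_add hint1 hint2]
      exact integral_congr_ae (Filter.Eventually.of_forall fun θ' => by ring)
    have hintg : Integrable (fun θ' => C * (Iic t).indicator (fun _ => (1:ℝ)) θ' * q t) F := by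
      have : Integrable ((Iic t).indicator (fun _ => (1:ℝ))) F :=
        (integrable_const (1:ℝ)).indicator measurableSet_Iic
      exact (this.const_mul C).mul_const (q t)
    have hmq : ∫ θ', m θ' * q θ' ∂F ≤ μ * q t := by
      have hle : ∫ θ', m θ' * q θ' ∂F
          ≤ ∫ θ', C * (Iic t).indicator (fun _ => (1:ℝ)) θ' * q t ∂F := by
        refine integral_mono_ae hint2 hintg ?_
        refine hqae.mono fun θ' ⟨hmem, h01, _⟩ => ?_
        rw [hm]
        by_cases hmt : θ' ∈ Iic t
        · simp only [indicator_of_mem hmt]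
          have : q θ' ≤ q t := hqmono (hIocIcc hmem) htI (mem_Iic.mp hmt)
          nlinarith
        · simp [indicator_of_notMem hmt]
      refine hle.trans_eq ?_
      rw [integral_mul_const, integral_const_mul,
        integral_indicator_const (1:ℝ) measurableSet_Iic, smul_eq_mul, mul_one, hC,
        measureReal_def, div_mul_cancel₀ μ htR.ne']
    rw [hW]
    linarith
  -- combine
  have hkey : ∀ w : ℝ, (∀ t ∈ Ioc θlow θhigh, w ≤ B + μ * q t) → B + μ * L ≤ w →
      w = B + μ * L := by
    intro w hup hlo
    refine le_antisymm ?_ hlo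
    have hLB : (w - B) / μ ≤ L := by
      refine le_csInf ⟨q θhigh, mem_image_of_mem q ⟨hθ, le_rfl⟩⟩ ?_
      rintro x ⟨θ', hθ', rfl⟩
      rw [div_le_iff₀ hμ]
      linarith [hup θ' hθ']
    rw [div_le_iff₀ hμ] at hLB
    linarith
  constructor
  · refine hkey _ (fun t ht => ?_) hge0
    obtain ⟨m, hmM, hmle⟩ := hspike t ht
    exact (csInf_le hbddM0 (mem_image_of_mem _ (hMsub hmM))).trans hmle
  · refine hkey _ (fun t ht => ?_) hgem
    obtain ⟨m, hmM, hmle⟩ := hspike t ht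
    exact (csInf_le hbddMm (mem_image_of_mem _ hmM)).trans hmle

lemma bounded_integrable {θlow θhigh M : ℝ} {F : Measure ℝ} [IsFiniteMeasure F]
    (hae : ∀ᵐ θ ∂F, θ ∈ Ioc θlow θhigh) {g : ℝ → ℝ}
    (hg : AEStronglyMeasurable g F)
    (hb : ∀ θ ∈ Ioc θlow θhigh, ‖g θ‖ ≤ M) : Integrable g F :=
  Integrable.mono' (integrable_const M) hg (hae.mono hb)

lemma pt_bound1 {θ c L qθ : ℝ} (h0 : 0 ≤ qθ) (h1 : qθ ≤ 1) (hL : L ≤ qθ) (hL0 : 0 ≤ L) :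
    (θ - c) * (qθ - L) ≤ max (θ - c) 0 * (1 - L) := by
  rcases le_or_gt (θ - c) 0 with h | h
  · rw [max_eq_right h]; nlinarith
  · rw [max_eq_left h.le]; nlinarith

lemma pt_bound2 {θ c qθ : ℝ} (h0 : 0 ≤ qθ) (h1 : qθ ≤ 1) :
    (θ - c) * qθ ≤ max (θ - c) 0 := by
  rcases le_or_gt (θ - c) 0 with h | h
  · rw [max_eq_right h]; nlinarith
  · rw [max_eq_left h.le]; nlinarith

lemma cvx_le_max {a b l : ℝ} (h0 : 0 ≤ l) (h1 : l ≤ 1) :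
    l * a + (1 - l) * b ≤ max a b := by
  rcases le_total a b with h | h
  · rw [max_eq_right h]; nlinarith
  · rw [max_eq_left h]; nlinarith

/-- **Proposition 1(a).** With unit demand, under the unknown-correlation and
negative-correlation benchmarks the optimal allocation is a mandate `q* ≡ 1` if
`μ ≥ ∫ max (c - θ) 0 dF` and laissez-faire `q*(θ) = 1{θ > c}` otherwise; away from the
knife-edge case it is the F-a.e. unique maximizer. -/
theorem vaccine_mandate_or_no_intervention
    (θlow θhigh c μ : ℝ) (hθlow : 0 ≤ θlow) (hθ : θlow < θhigh)
    (hc : 0 < c) (hμ : 0 < μ)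
    (F : Measure ℝ) [IsProbabilityMeasure F]
    (f : ℝ → ℝ) (hf_cont : ContinuousOn f (Icc θlow θhigh))
    (hf_pos : ∀ θ ∈ Icc θlow θhigh, 0 < f θ)
    (hF : F = (volume.restrict (Icc θlow θhigh)).withDensity fun θ => ENNReal.ofReal (f θ)) :
    let qstar : ℝ → ℝ :=
      fun θ => if (∫ θ', max (c - θ') 0 ∂F) ≤ μ then 1 else if c < θ then 1 else 0
    (∀ q ∈ Q1 θlow θhigh,
      worst1 F c (M0 F μ) q ≤ worst1 F c (M0 F μ) qstar) ∧
    (∀ q ∈ Q1 θlow θhigh,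
      worst1 F c (Mminus θlow θhigh F μ) q ≤ worst1 F c (Mminus θlow θhigh F μ) qstar) ∧
    (μ ≠ ∫ θ', max (c - θ') 0 ∂F →
      (∀ q ∈ Q1 θlow θhigh,
        worst1 F c (M0 F μ) q = worst1 F c (M0 F μ) qstar → q =ᵐ[F] qstar) ∧
      (∀ q ∈ Q1 θlow θhigh,
        worst1 F c (Mminus θlow θhigh F μ) q = worst1 F c (Mminus θlow θhigh F μ) qstar →
          q =ᵐ[F] qstar)) := by
  intro qstar
  -- basic measure facts
  have hcompl : F (Icc θlow θhigh)ᶜ = 0 := F_compl_null hF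
  have hsing : ∀ a : ℝ, F {a} = 0 := F_singleton_null hF
  have hIic : ∀ t ∈ Ioc θlow θhigh, 0 < F (Iic t) :=
    fun t ht => F_Iic_pos hθ hf_cont hf_pos hF ht
  have hae := ae_Ioc hcompl hsing
  have hIocIcc : Ioc θlow θhigh ⊆ Icc θlow θhigh := Ioc_subset_Icc_self
  set R : ℝ := |θlow| + |θhigh| + |c| with hR
  have hRb : ∀ θ' ∈ Ioc θlow θhigh, |θ' - c| ≤ R := by
    intro θ' hm
    have h1 := neg_abs_le θlow
    have h2 := le_abs_self θhigh
    have h3 := neg_abs_le c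
    have h4 := le_abs_self c
    have h5 := abs_nonneg θlow
    have h6 := abs_nonneg θhigh
    have h7 := abs_nonneg c
    rw [abs_le, hR]
    constructor <;> [linarith [hm.1]; linarith [hm.2]]
  -- integrability of basic functions
  have hintid : Integrable (fun θ' => θ' - c) F := by
    refine bounded_integrable (M := R) hae
      (measurable_id.sub measurable_const).aestronglyMeasurable fun θ' hm => ?_
    simpa using hRb θ' hm
  have hintmax : Integrable (fun θ' => max (θ' - c) 0) F := by
    refine bounded_integrable (M := R) hae
      ((measurable_id.sub measurable_const).max measurable_const).aestronglyMeasurable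
      fun θ' hm => ?_
    rw [Real.norm_eq_abs, abs_le]
    obtain ⟨hl, hr⟩ := abs_le.mp (hRb θ' hm)
    have hR0 : 0 ≤ R := (abs_nonneg _).trans (hRb θ' hm)
    rcases le_or_gt (θ' - c) 0 with h | h
    · rw [max_eq_right h]; exact ⟨by linarith, hR0⟩
    · rw [max_eq_left h.le]; exact ⟨by linarith, hr⟩
  have hintK : Integrable (fun θ' => max (c - θ') 0) F := by
    refine bounded_integrable (M := R) hae
      ((measurable_const.sub measurable_id).max measurable_const).aestronglyMeasurable
      fun θ' hm => ?_
    rw [Real.norm_eq_abs, abs_le]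
    obtain ⟨hl, hr⟩ := abs_le.mp (hRb θ' hm)
    have hR0 : 0 ≤ R := (abs_nonneg _).trans (hRb θ' hm)
    rcases le_or_gt (c - θ') 0 with h | h
    · rw [max_eq_right h]; exact ⟨by linarith, hR0⟩
    · rw [max_eq_left h.le]; exact ⟨by linarith, by linarith⟩
  set K : ℝ := ∫ θ', max (c - θ') 0 ∂F with hK
  set VLF : ℝ := ∫ θ', max (θ' - c) 0 ∂F with hVLF
  set VM : ℝ := (∫ θ', (θ' - c) ∂F) + μ with hVM
  have hqs : ∀ θ', qstar θ' = if K ≤ μ then 1 else if c < θ' then 1 else 0 :=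
    fun _ => rfl
  have hrel : VM - VLF = μ - K := by
    have hdiff : (fun θ' => θ' - c) = fun θ' => max (θ' - c) 0 - max (c - θ') 0 := by
      funext θ'
      rcases le_total θ' c with h | h
      · rw [max_eq_right (by linarith), max_eq_left (by linarith)]; ring
      · rw [max_eq_left (by linarith), max_eq_right (by linarith)]; ring
    have : ∫ θ', (θ' - c) ∂F = VLF - K := by
      rw [hdiff, integral_sub hintmax hintK]
    rw [hVM, this]; ring
  -- q* is in Q1
  have hqstarQ1 : qstar ∈ Q1 θlow θhigh := by
    constructor
    · intro a _ b _ hab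
      rw [hqs a, hqs b]
      by_cases hKc : K ≤ μ
      · simp [hKc]
      · simp only [if_neg hKc]
        by_cases hca : c < a
        · rw [if_pos hca, if_pos (lt_of_lt_of_le hca hab)]
        · rw [if_neg hca]
          split <;> norm_num
    · intro θ' _
      rw [hqs θ']
      split_ifs <;> norm_num
  -- the key convexity bound and L-facts for each q
  set Lf : (ℝ → ℝ) → ℝ := fun q => sInf (q '' Ioc θlow θhigh) with hLf
  have hLfacts : ∀ q ∈ Q1 θlow θhigh,
      (0 ≤ Lf q ∧ Lf q ≤ 1 ∧ ∀ θ' ∈ Ioc θlow θhigh, Lf q ≤ q θ') := by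
    rintro q ⟨hqmono, hq01⟩
    have hbdd : BddBelow (q '' Ioc θlow θhigh) := by
      refine ⟨0, ?_⟩
      rintro x ⟨θ', hθ', rfl⟩
      exact (hq01 θ' (hIocIcc hθ')).1
    have hLle : ∀ θ' ∈ Ioc θlow θhigh, Lf q ≤ q θ' := fun θ' hθ' =>
      csInf_le hbdd (mem_image_of_mem q hθ')
    have hL0 : 0 ≤ Lf q := by
      refine le_csInf ⟨q θhigh, mem_image_of_mem q ⟨hθ, le_rfl⟩⟩ ?_
      rintro x ⟨θ', hθ', rfl⟩
      exact (hq01 θ' (hIocIcc hθ')).1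
    exact ⟨hL0, (hLle θhigh ⟨hθ, le_rfl⟩).trans (hq01 θhigh ⟨hθ.le, le_rfl⟩).2, hLle⟩
  have hint1 : ∀ q ∈ Q1 θlow θhigh, Integrable (fun θ' => (θ' - c) * q θ') F := by
    rintro q ⟨hqmono, hq01⟩
    refine bounded_integrable (M := R) hae
      ((measurable_id.sub measurable_const).aestronglyMeasurable.mul
        (q_aemeas hθ.le hcompl hqmono)) fun θ' hm => ?_
    rw [Real.norm_eq_abs, abs_mul]
    have h01 := hq01 θ' (hIocIcc hm)
    have habs : |q θ'| ≤ 1 := abs_le.mpr ⟨by linarith [h01.1], h01.2⟩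
    calc |θ' - c| * |q θ'| ≤ R * 1 :=
          mul_le_mul (hRb θ' hm) habs (abs_nonneg _) (by positivity)
      _ = R := mul_one R
  have hGle : ∀ q ∈ Q1 θlow θhigh,
      (∫ θ', (θ' - c) * q θ' ∂F) + μ * Lf q ≤ Lf q * VM + (1 - Lf q) * VLF := by
    intro q hq
    obtain ⟨hL0, hL1, hLle⟩ := hLfacts q hq
    obtain ⟨hqmono, hq01⟩ := hq
    have hqm := q_aemeas hθ.le hcompl hqmono
    have hint2 : Integrable (fun θ' => (θ' - c) * (q θ' - Lf q)) F := by
      have : (fun θ' => (θ' - c) * (q θ' - Lf q))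
          = fun θ' => (θ' - c) * q θ' - Lf q * (θ' - c) := by
        funext θ'; ring
      rw [this]
      exact (hint1 q ⟨hqmono, hq01⟩).sub (hintid.const_mul _)
    have hsplit : ∫ θ', (θ' - c) * q θ' ∂F
        = Lf q * (∫ θ', (θ' - c) ∂F) + ∫ θ', (θ' - c) * (q θ' - Lf q) ∂F := by
      have e1 : ∫ θ', (θ' - c) * (q θ' - Lf q) ∂F
          = ∫ θ', ((θ' - c) * q θ' - Lf q * (θ' - c)) ∂F :=
        integral_congr_ae (Filter.Eventually.of_forall fun θ' => by ring)
      rw [e1, integral_sub (hint1 q ⟨hqmono, hq01⟩) (hintid.const_mul _),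
        integral_const_mul]
      ring
    have hmono : ∫ θ', (θ' - c) * (q θ' - Lf q) ∂F
        ≤ ∫ θ', max (θ' - c) 0 * (1 - Lf q) ∂F := by
      refine integral_mono_ae hint2 (hintmax.mul_const _) ?_
      refine hae.mono fun θ' hm => ?_
      have h01 := hq01 θ' (hIocIcc hm)
      exact pt_bound1 h01.1 h01.2 (hLle θ' hm) hL0
    have e2 : ∫ θ', max (θ' - c) 0 * (1 - Lf q) ∂F = (1 - Lf q) * VLF := by
      rw [integral_mul_const, hVLF]; ring
    rw [hsplit]
    rw [e2] at hmono
    rw [hVM]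
    nlinarith [hmono]
  -- worst-case formula
  have hform := fun q hq => worst1_formula θlow θhigh c μ hθ hμ F hcompl hsing hIic q hq
  -- compute the value at qstar
  have hqstarval : (∫ θ', (θ' - c) * qstar θ' ∂F) + μ * Lf qstar = max VM VLF := by
    by_cases hKc : K ≤ μ
    · have hq1 : ∀ θ', qstar θ' = 1 := fun θ' => by rw [hqs θ', if_pos hKc]
      have hB : ∫ θ', (θ' - c) * qstar θ' ∂F = ∫ θ', (θ' - c) ∂F :=
        integral_congr_ae (Filter.Eventually.of_forall fun θ' => by
          show (θ' - c) * qstar θ' = θ' - c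
          rw [hq1 θ', mul_one])
      have hLq : Lf qstar = 1 := by
        have himg : qstar '' Ioc θlow θhigh = {1} := by
          rw [show qstar = fun _ => (1:ℝ) from funext hq1]
          exact (nonempty_Ioc.mpr hθ).image_const 1
        rw [hLf]; simp only [himg, csInf_singleton]
      rw [hB, hLq, max_eq_left (by linarith [hrel] : VLF ≤ VM), hVM]
      ring
    · push_neg at hKc
      have hclow : θlow < c := by
        by_contra hcl
        push_neg at hcl
        have hz : ∀ᵐ θ' ∂F, max (c - θ') 0 = 0 :=
          hae.mono fun θ' hm => max_eq_right (by linarith [hm.1])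
        have : K = 0 := by
          rw [hK, integral_congr_ae hz, integral_zero]
        linarith
      have hq1 : ∀ θ', qstar θ' = if c < θ' then 1 else 0 := fun θ' => by
        rw [hqs θ', if_neg (not_le.mpr hKc)]
      have hB : ∫ θ', (θ' - c) * qstar θ' ∂F = VLF := by
        rw [hVLF]
        refine integral_congr_ae (Filter.Eventually.of_forall fun θ' => ?_)
        show  (θ' - c) * qstar θ' = max (θ' - c) 0
        rw [hq1 θ']
        rcases lt_or_ge c θ' with h | h
        · rw [if_pos h, max_eq_left (by linarith), mul_one]
        · rw [if_neg (not_lt.mpr h), max_eq_right (by linarith), mul_zero]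
      have hLq : Lf qstar = 0 := by
        have hmem : min c θhigh ∈ Ioc θlow θhigh :=
          ⟨lt_min hclow hθ, min_le_right _ _⟩
        have hq0 : qstar (min c θhigh) = 0 := by
          rw [hq1, if_neg (not_lt.mpr (min_le_left _ _))]
        obtain ⟨hL0, _, hLle⟩ := hLfacts qstar hqstarQ1
        have := hLle _ hmem
        rw [hq0] at this
        linarith
      rw [hB, hLq, max_eq_right (by linarith [hrel] : VM ≤ VLF)]
      ring
  have hwval : ∀ M ∈ ({M0 F μ, Mminus θlow θhigh F μ} : Set (Set (ℝ → ℝ))), True := fun _ _ => trivial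
  -- main comparisons
  have hmain0 : ∀ q ∈ Q1 θlow θhigh,
      worst1 F c (M0 F μ) q ≤ worst1 F c (M0 F μ) qstar := by
    intro q hq
    rw [(hform q hq).1, (hform qstar hqstarQ1).1, hqstarval]
    obtain ⟨hL0, hL1, _⟩ := hLfacts q hq
    exact (hGle q hq).trans (cvx_le_max hL0 hL1)
  have hmainm : ∀ q ∈ Q1 θlow θhigh,
      worst1 F c (Mminus θlow θhigh F μ) q ≤ worst1 F c (Mminus θlow θhigh F μ) qstar := by
    intro q hq
    rw [(hform q hq).2, (hform qstar hqstarQ1).2, hqstarval]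
    obtain ⟨hL0, hL1, _⟩ := hLfacts q hq
    exact (hGle q hq).trans (cvx_le_max hL0 hL1)
  refine ⟨hmain0, hmainm, ?_⟩
  -- uniqueness
  intro hne
  have huniq : ∀ q ∈ Q1 θlow θhigh,
      (∫ θ', (θ' - c) * q θ' ∂F) + μ * Lf q = max VM VLF → q =ᵐ[F] qstar := by
    intro q hq heq
    obtain ⟨hL0, hL1, hLle⟩ := hLfacts q hq
    have hGb := hGle q hq
    by_cases hKc : K ≤ μ
    · -- mandate case: K < μ, VLF < VM
      have hKlt : K < μ := lt_of_le_of_ne hKc (Ne.symm (by rw [hK] at hne ⊢; exact hne))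
      have hVlt : VLF < VM := by linarith [hrel]
      rw [max_eq_left hVlt.le] at heq
      have hL1' : 1 ≤ Lf q := by nlinarith [heq ▸ hGb]
      refine hae.mono fun θ' hm => ?_
      have h1 : q θ' = 1 := le_antisymm (hq.2 θ' (hIocIcc hm)).2
        (hL1'.trans (hLle θ' hm))
      rw [h1, hqs θ', if_pos hKc]
    · -- laissez-faire case: μ < K, VM < VLF
      push_neg at hKc
      have hVlt : VM < VLF := by linarith [hrel]
      rw [max_eq_right hVlt.le] at heq
      have hLz : Lf q = 0 := by nlinarith [heq ▸ hGb]
      rw [hLz, mul_zero, add_zero] at heq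
      -- pointwise a.e. equality of (θ-c) q and max (θ-c) 0
      have hptle : ∀ᵐ θ' ∂F, 0 ≤ max (θ' - c) 0 - (θ' - c) * q θ' := by
        refine hae.mono fun θ' hm => ?_
        have h01 := hq.2 θ' (hIocIcc hm)
        linarith [pt_bound2 (θ := θ') (c := c) h01.1 h01.2]
      have hintsub : Integrable (fun θ' => max (θ' - c) 0 - (θ' - c) * q θ') F :=
        hintmax.sub (hint1 q hq)
      have hzero : ∫ θ', (max (θ' - c) 0 - (θ' - c) * q θ') ∂F = 0 := by
        rw [integral_sub hintmax (hint1 q hq), ← hVLF, heq, sub_self]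
      have haeeq : ∀ᵐ θ' ∂F, max (θ' - c) 0 - (θ' - c) * q θ' = 0 := by
        have := (integral_eq_zero_iff_of_nonneg_ae hptle hintsub).mp hzero
        exact this.mono fun θ' h => h
      have hnec : ∀ᵐ θ' ∂F, θ' ≠ c := by
        rw [ae_iff]
        simpa only [ne_eq, not_not, setOf_eq_eq_singleton] using hsing c
      filter_upwards [haeeq, hnec, hae] with θ' h0 hnc hm
      rw [hqs θ', if_neg (not_le.mpr hKc)]
      rcases lt_trichotomy θ' c with h | h | h
      · rw [if_neg (not_lt.mpr h.le)]
        rw [max_eq_right (by linarith), zero_sub, neg_eq_zero, mul_eq_zero] at h0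
        rcases h0 with h0 | h0
        · exact absurd (by linarith : θ' = c) hnc
        · exact h0
      · exact absurd h hnc
      · rw [if_pos h]
        rw [max_eq_left (by linarith)] at h0
        have hc0 : θ' - c ≠ 0 := by intro hz; exact hnc (by linarith)
        have : (θ' - c) * (1 - q θ') = 0 := by linarith
        rcases mul_eq_zero.mp this with h1 | h1
        · exact absurd h1 hc0
        · linarith
  constructor
  · intro q hq heq
    refine huniq q hq ?_
    rw [← (hform q hq).1, heq, (hform qstar hqstarQ1).1, hqstarval]
  · intro q hq heq
    refine huniq q hq ?_
    rw [← (hform q hq).2, heq, (hform qstar hqstarQ1).2, hqstarval]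

end
end

section
/- (Proposition 1(b): subsidy under positive correlation with unit demand.) The allocation q*(θ) := 1{θ > c − μ} maximizes the worst-case total surplus under the positive-correlation benchmark: for every q ∈ Q₁, inf over m ∈ M₊ of W₁(q,m) is at most inf over m ∈ M₊ of W₁(q*, m); moreover, any q ∈ Q₁ attaining this maximal worst-case value satisfies q = q* F-almost everywhere. -/
open MeasureTheory Set

noncomputable section

/-- **Proposition 1(b).** With unit demand, under the positive-correlation
benchmark the allocation `q*(θ) = 1{θ > c - μ}` (a subsidy `μ`) maximizes the worst-case total
surplus, and it is the F-a.e. unique maximizer. -/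
theorem vaccine_subsidy_positive_correlation
    (θlow θhigh c μ : ℝ) (hθlow : 0 ≤ θlow) (hθ : θlow < θhigh)
    (hc : 0 < c) (hμ : 0 < μ)
    (F : Measure ℝ) [IsProbabilityMeasure F]
    (f : ℝ → ℝ) (hf_cont : ContinuousOn f (Icc θlow θhigh))
    (hf_pos : ∀ θ ∈ Icc θlow θhigh, 0 < f θ)
    (hF : F = (volume.restrict (Icc θlow θhigh)).withDensity fun θ => ENNReal.ofReal (f θ)) :
    (∀ q ∈ Q1 θlow θhigh,
      worst1 F c (Mplus θlow θhigh F μ) q ≤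
        worst1 F c (Mplus θlow θhigh F μ) (fun θ => if c - μ < θ then 1 else 0)) ∧
    (∀ q ∈ Q1 θlow θhigh,
      worst1 F c (Mplus θlow θhigh F μ) q =
        worst1 F c (Mplus θlow θhigh F μ) (fun θ => if c - μ < θ then 1 else 0) →
      q =ᵐ[F] fun θ => if c - μ < θ then (1:ℝ) else 0) := by
  classical
  set qs : ℝ → ℝ := fun θ => if c - μ < θ then 1 else 0 with hqsdef
  have hprob : F univ = 1 := measure_univ
  have habs : F ≪ volume.restrict (Icc θlow θhigh) := by
    rw [hF]; exact withDensity_absolutelyContinuous _ _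
  have hae : ∀ᵐ θ ∂F, θ ∈ Icc θlow θhigh :=
    (ae_restrict_mem measurableSet_Icc).filter_mono habs.ae_le
  have hne : ∀ᵐ θ ∂F, θ ≠ c - μ := by
    have h1 : (volume.restrict (Icc θlow θhigh)) {c - μ} = 0 := by
      rw [Measure.restrict_apply (measurableSet_singleton _)]
      exact measure_mono_null inter_subset_left (measure_singleton _)
    have h2 : F {c - μ} = 0 := habs h1
    rw [ae_iff]
    convert h2 using 2
    ext θ; simp
  have hqs_meas : Measurable qs := by
    exact Measurable.ite measurableSet_Ioi measurable_const measurable_const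
  have hqs01 : ∀ θ, 0 ≤ qs θ ∧ qs θ ≤ 1 := fun θ => by
    simp only [hqsdef]; split <;> norm_num
  -- integrability of a.e.-bounded functions
  have hIntBdd : ∀ (g : ℝ → ℝ) (Cg : ℝ), AEStronglyMeasurable g F →
      (∀ᵐ θ ∂F, |g θ| ≤ Cg) → Integrable g F := by
    intro g Cg hg hb
    refine Integrable.mono' (integrable_const Cg) hg ?_
    filter_upwards [hb] with θ h
    simpa [Real.norm_eq_abs] using h
  have hqs_int : Integrable qs F :=
    hIntBdd qs 1 hqs_meas.aestronglyMeasurable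
      (ae_of_all _ fun θ => abs_le.2 ⟨by linarith [(hqs01 θ).1], (hqs01 θ).2⟩)
  -- a.e. measurability of monotone allocations
  have hq_aesm : ∀ q ∈ Q1 θlow θhigh, AEStronglyMeasurable q F := by
    intro q hq
    have hmem : ∀ x : ℝ, max θlow (min x θhigh) ∈ Icc θlow θhigh := fun x =>
      ⟨le_max_left _ _, max_le hθ.le (min_le_right _ _)⟩
    have hmono : Monotone (fun x => q (max θlow (min x θhigh))) := by
      intro x y hxy
      exact hq.1 (hmem x) (hmem y) (max_le_max le_rfl (min_le_min hxy le_rfl))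
    refine (hmono.measurable.aestronglyMeasurable).congr ?_
    filter_upwards [hae] with θ hθm
    rw [min_eq_left hθm.2, max_eq_right hθm.1]
  -- the constant function μ is in Mplus
  have hm0 : (fun _ : ℝ => μ) ∈ Mplus θlow θhigh F μ := by
    refine ⟨⟨measurable_const, fun _ => hμ.le, ?_⟩, monotoneOn_const⟩
    simp
  -- members of Mplus are integrable
  have hm_int : ∀ m ∈ Mplus θlow θhigh F μ, Integrable m F := by
    intro m hm
    by_contra h
    have h0 : ∫ θ, m θ ∂F = 0 := integral_undef h
    rw [hm.1.2.2] at h0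
    exact hμ.ne' h0
  have hmqs_int : ∀ m ∈ Mplus θlow θhigh F μ, Integrable (fun θ => m θ * qs θ) F := by
    intro m hm
    have := (hm_int m hm).bdd_mul (c := 1) hqs_meas.aestronglyMeasurable
      (ae_of_all _ fun θ => by
        simpa [Real.norm_eq_abs] using abs_le.2 ⟨by linarith [(hqs01 θ).1], (hqs01 θ).2⟩)
    simpa [mul_comm] using this
  set K : ℝ := |θlow| + |θhigh| + c + μ with hKdef
  have hK0 : 0 ≤ K := by
    have := abs_nonneg θlow; have := abs_nonneg θhigh; linarith
  have hKbd : ∀ θ ∈ Icc θlow θhigh, |θ - c + μ| ≤ K ∧ |θ - c| ≤ K := by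
    intro θ hθm
    have h1 := neg_abs_le θlow
    have h2 := le_abs_self θhigh
    simp only [hKdef]
    constructor <;> rw [abs_le] <;> constructor <;>
      nlinarith [hθm.1, hθm.2, abs_nonneg θlow, abs_nonneg θhigh]
  have hBqs : Integrable (fun θ => (θ - c + μ) * qs θ) F := by
    refine hIntBdd _ K ((measurable_id.sub_const c |>.add_const μ).aestronglyMeasurable.mul
      hqs_meas.aestronglyMeasurable) ?_
    filter_upwards [hae] with θ hθm
    rw [abs_mul]
    calc |θ - c + μ| * |qs θ| ≤ K * 1 := by
          apply mul_le_mul (hKbd θ hθm).1 (abs_le.2 ⟨by linarith [(hqs01 θ).1], (hqs01 θ).2⟩)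
            (abs_nonneg _) hK0
      _ = K := mul_one K
  have hBq : ∀ q ∈ Q1 θlow θhigh, Integrable (fun θ => (θ - c + μ) * q θ) F := by
    intro q hq
    refine hIntBdd _ K ((measurable_id.sub_const c |>.add_const μ).aestronglyMeasurable.mul
      (hq_aesm q hq)) ?_
    filter_upwards [hae] with θ hθm
    rw [abs_mul]
    calc |θ - c + μ| * |q θ| ≤ K * 1 := by
          apply mul_le_mul (hKbd θ hθm).1
            (abs_le.2 ⟨by linarith [(hq.2 θ hθm).1], (hq.2 θ hθm).2⟩) (abs_nonneg _) hK0
      _ = K := mul_one K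
  -- the key inequality: W1 qs m₀ ≤ W1 qs m for all m ∈ Mplus
  have hW : ∀ m ∈ Mplus θlow θhigh F μ, W1 F c qs (fun _ => μ) ≤ W1 F c qs m := by
    intro m hm
    set t' : ℝ := max θlow (min (c - μ) θhigh) with ht'def
    have ht'mem : t' ∈ Icc θlow θhigh := ⟨le_max_left _ _, max_le hθ.le (min_le_right _ _)⟩
    set v : ℝ := m t' with hvdef
    set I : ℝ := ∫ θ, qs θ ∂F with hIdef
    set J : ℝ := ∫ θ, m θ * qs θ ∂F with hJdef
    have hI0 : 0 ≤ I := integral_nonneg fun θ => (hqs01 θ).1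
    have hI1 : I ≤ 1 := by
      have := integral_mono hqs_int (integrable_const 1) (fun θ => (hqs01 θ).2)
      simpa using this
    have h_i : v * I ≤ J := by
      rw [hIdef, ← integral_const_mul]
      refine integral_mono_ae (hqs_int.const_mul v) (hmqs_int m hm) ?_
      filter_upwards [hae] with θ hθm
      simp only [hqsdef]
      by_cases h : c - μ < θ
      · rw [if_pos h, mul_one, mul_one]
        refine hm.2 ht'mem hθm ?_
        exact max_le hθm.1 (le_trans (min_le_left _ _) h.le)
      · rw [if_neg h, mul_zero, mul_zero]
    have h_ii : μ - J ≤ v * (1 - I) := by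
      have e1 : ∫ θ, (m θ - m θ * qs θ) ∂F = μ - J := by
        rw [integral_sub (hm_int m hm) (hmqs_int m hm), hm.1.2.2]
      have e2 : ∫ θ, (v - v * qs θ) ∂F = v * (1 - I) := by
        rw [integral_sub (integrable_const v) (hqs_int.const_mul v), integral_const_mul,
          integral_const]
        simp only [probReal_univ, one_smul]
        ring
      rw [← e1, ← e2]
      refine integral_mono_ae ((hm_int m hm).sub (hmqs_int m hm))
        ((integrable_const v).sub (hqs_int.const_mul v)) ?_
      filter_upwards [hae] with θ hθm
      simp only [hqsdef]
      by_cases h : c - μ < θ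
      · rw [if_pos h, mul_one, mul_one]; simp
      · rw [if_neg h, mul_zero, mul_zero, sub_zero, sub_zero]
        refine hm.2 hθm ht'mem ?_
        exact le_trans (le_min (not_lt.1 h) hθm.2) (le_max_right _ _)
    have hJI : μ * I ≤ J := by
      nlinarith [mul_nonneg (sub_nonneg.2 hI1) (sub_nonneg.2 h_i),
        mul_nonneg hI0 (sub_nonneg.2 h_ii)]
    -- assemble
    have hAint : Integrable (fun θ => (θ - c + m θ) * qs θ) F := by
      have h1 : Integrable (fun θ => (θ - c) * qs θ) F := by
        refine hIntBdd _ K ((measurable_id.sub_const c).aestronglyMeasurable.mul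
          hqs_meas.aestronglyMeasurable) ?_
        filter_upwards [hae] with θ hθm
        rw [abs_mul]
        calc |θ - c| * |qs θ| ≤ K * 1 := by
              apply mul_le_mul (hKbd θ hθm).2
                (abs_le.2 ⟨by linarith [(hqs01 θ).1], (hqs01 θ).2⟩) (abs_nonneg _) hK0
          _ = K := mul_one K
      have := h1.add (hmqs_int m hm)
      refine this.congr (ae_of_all _ fun θ => ?_)
      simp only [Pi.add_apply]
      ring
    have hdiff : W1 F c qs m - W1 F c qs (fun _ : ℝ => μ) = J - μ * I := by
      simp only [W1]
      rw [← integral_sub hAint hBqs]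
      have : ∀ θ : ℝ, (θ - c + m θ) * qs θ - (θ - c + μ) * qs θ
          = m θ * qs θ - μ * qs θ := fun θ => by ring
      simp_rw [this]
      rw [integral_sub (hmqs_int m hm) (hqs_int.const_mul μ), integral_const_mul]
    linarith [hJI, hdiff.ge, hdiff.le]
  -- worst-case value at qs
  have hworst_qs : worst1 F c (Mplus θlow θhigh F μ) qs = W1 F c qs (fun _ => μ) := by
    refine le_antisymm ?_ ?_
    · exact csInf_le ⟨W1 F c qs (fun _ => μ), by rintro x ⟨m, hm, rfl⟩; exact hW m hm⟩
        ⟨_, hm0, rfl⟩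
    · refine le_csInf ⟨_, ⟨_, hm0, rfl⟩⟩ ?_
      rintro x ⟨m, hm, rfl⟩
      exact hW m hm
  -- lower bound for general q: image is bounded below
  have hbddb : ∀ q ∈ Q1 θlow θhigh,
      BddBelow ((fun m => W1 F c q m) '' Mplus θlow θhigh F μ) := by
    intro q hq
    refine ⟨-K, ?_⟩
    rintro x ⟨m, hm, rfl⟩
    by_cases hint : Integrable (fun θ => (θ - c + m θ) * q θ) F
    · have hconst : (-K : ℝ) = ∫ _θ, (-K : ℝ) ∂F := by simp
      simp only [W1]
      rw [hconst]
      refine integral_mono_ae (integrable_const _) hint ?_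
      filter_upwards [hae] with θ hθm
      have hq0 := (hq.2 θ hθm).1
      have hq1 := (hq.2 θ hθm).2
      have hmnn := hm.1.2.1 θ
      have h1 := neg_abs_le θlow
      have h2 := le_abs_self θhigh
      nlinarith [mul_nonneg hmnn hq0,
        mul_nonneg (show (0:ℝ) ≤ θ - c + K by simp only [hKdef]; nlinarith [hθm.1]) hq0,
        mul_nonneg hK0 (sub_nonneg.2 hq1)]
    · simp only [W1]
      rw [integral_undef hint]
      linarith
  have hworst_le : ∀ q ∈ Q1 θlow θhigh,
      worst1 F c (Mplus θlow θhigh F μ) q ≤ W1 F c q (fun _ => μ) := fun q hq =>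
    csInf_le (hbddb q hq) ⟨_, hm0, rfl⟩
  -- pointwise comparison at the constant externality μ
  have hptwise : ∀ q ∈ Q1 θlow θhigh, ∀ᵐ θ ∂F,
      (θ - c + μ) * q θ ≤ (θ - c + μ) * qs θ := by
    intro q hq
    filter_upwards [hae] with θ hθm
    simp only [hqsdef]
    by_cases h : c - μ < θ
    · rw [if_pos h, mul_one]
      have : 0 ≤ θ - c + μ := by linarith
      nlinarith [(hq.2 θ hθm).2]
    · rw [if_neg h, mul_zero]
      have h1 : θ - c + μ ≤ 0 := by linarith [not_lt.1 h]
      exact mul_nonpos_of_nonpos_of_nonneg h1 (hq.2 θ hθm).1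
  have hcmp : ∀ q ∈ Q1 θlow θhigh,
      W1 F c q (fun _ => μ) ≤ W1 F c qs (fun _ => μ) := by
    intro q hq
    simp only [W1]
    exact integral_mono_ae (hBq q hq) hBqs (hptwise q hq)
  constructor
  · intro q hq
    calc worst1 F c (Mplus θlow θhigh F μ) q ≤ W1 F c q (fun _ => μ) := hworst_le q hq
      _ ≤ W1 F c qs (fun _ => μ) := hcmp q hq
      _ = worst1 F c (Mplus θlow θhigh F μ) qs := hworst_qs.symm
  · intro q hq heq
    have hle := hworst_le q hq
    rw [heq, hworst_qs] at hle
    have heqW : W1 F c q (fun _ => μ) = W1 F c qs (fun _ => μ) :=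
      le_antisymm (hcmp q hq) hle
    have h0 : ∫ θ, ((θ - c + μ) * qs θ - (θ - c + μ) * q θ) ∂F = 0 := by
      rw [integral_sub hBqs (hBq q hq)]
      have : W1 F c q (fun _ => μ) = ∫ θ, (θ - c + μ) * q θ ∂F := rfl
      have h2 : W1 F c qs (fun _ => μ) = ∫ θ, (θ - c + μ) * qs θ ∂F := rfl
      rw [this, h2] at heqW
      linarith
    have hnn : 0 ≤ᵐ[F] fun θ => (θ - c + μ) * qs θ - (θ - c + μ) * q θ := by
      filter_upwards [hptwise q hq] with θ h
      simpa using h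
    have hzero : (fun θ => (θ - c + μ) * qs θ - (θ - c + μ) * q θ) =ᵐ[F] 0 :=
      (integral_eq_zero_iff_of_nonneg_ae hnn (hBqs.sub (hBq q hq))).1 h0
    filter_upwards [hzero, hae, hne] with θ hz hθm hnθ
    have h3 : (θ - c + μ) * (qs θ - q θ) = 0 := by
      have : (θ - c + μ) * qs θ - (θ - c + μ) * q θ = 0 := hz
      linarith [this, mul_sub (θ - c + μ) (qs θ) (q θ)]
    have h4 : θ - c + μ ≠ 0 := by
      intro h; apply hnθ; linarith
    have h5 : qs θ - q θ = 0 := (mul_eq_zero.1 h3).resolve_left h4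
    have : q θ = qs θ := by linarith
    exact this
end
end

section
/- (The Bayesian mandate condition is stronger than the robust one.) Let m : Θ → [0,∞) be Borel-measurable with ∫_Θ m dF = μ, and let c ∈ ℝ. If for every θ̂ ∈ Θ the partial integral ∫_{[θlow, θ̂]} (θ − c + m(θ)) dF(θ) ≥ 0, then ∫_Θ max{c − θ, 0} dF(θ) ≤ μ. -/
open MeasureTheory Set

/-- The Bayesian mandate condition is stronger than the robust one: if all
lower partial integrals of `θ - c + m θ` are nonnegative, then the average allocative
deadweight loss of a mandate is at most the mean externality `μ`. -/
theorem bayesian_mandate_condition_implies_robust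
    (θlow θhigh μ c : ℝ) (hθlow : 0 ≤ θlow) (hθ : θlow < θhigh) (hμ : 0 < μ)
    (F : Measure ℝ) [IsProbabilityMeasure F] (hsupp : F (Icc θlow θhigh)ᶜ = 0)
    (m : ℝ → ℝ) (hm_meas : Measurable m) (hm_nonneg : ∀ θ, 0 ≤ m θ)
    (hm_mean : ∫ θ, m θ ∂F = μ)
    (hpartial : ∀ θhat ∈ Icc θlow θhigh,
      0 ≤ ∫ θ in Icc θlow θhat, (θ - c + m θ) ∂F) :
    ∫ θ, max (c - θ) 0 ∂F ≤ μ := by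
  have hae : ∀ᵐ θ ∂F, θ ∈ Icc θlow θhigh := by
    rw [ae_iff]
    exact hsupp
  by_cases hc : c < θlow
  · have h0 : ∀ᵐ θ ∂F, max (c - θ) 0 = 0 := by
      filter_upwards [hae] with θ hθm
      have : c - θ ≤ 0 := by have := hθm.1; linarith
      simp [max_eq_right this]
    have : ∫ θ, max (c - θ) 0 ∂F = ∫ _θ, (0 : ℝ) ∂F := integral_congr_ae h0
    rw [this, integral_zero]
    linarith
  · push_neg at hc
    set θhat := min c θhigh with hθhatdef
    have hmem : θhat ∈ Icc θlow θhigh := ⟨le_min hc hθ.le, min_le_right _ _⟩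
    have key := hpartial θhat hmem
    have hm_int : Integrable m F := by
      by_contra h
      rw [integral_undef h] at hm_mean
      linarith
    have h1 : IntegrableOn (fun θ => θ - c) (Icc θlow θhat) F :=
      ContinuousOn.integrableOn_compact isCompact_Icc
        ((continuous_id.sub continuous_const).continuousOn)
    have h2 : IntegrableOn m (Icc θlow θhat) F := hm_int.integrableOn
    have hsplit : ∫ θ in Icc θlow θhat, (θ - c + m θ) ∂F
        = (∫ θ in Icc θlow θhat, (θ - c) ∂F) + ∫ θ in Icc θlow θhat, m θ ∂F :=
      integral_add h1 h2
    have hsetm : ∫ θ in Icc θlow θhat, m θ ∂F ≤ μ := by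
      rw [← hm_mean]
      exact setIntegral_le_integral hm_int (Filter.Eventually.of_forall hm_nonneg)
    have hmain : ∫ θ, max (c - θ) 0 ∂F
        = ∫ θ in Icc θlow θhat, (c - θ) ∂F := by
      rw [← integral_indicator (measurableSet_Icc)]
      apply integral_congr_ae
      filter_upwards [hae] with θ hθm
      by_cases hle : θ ∈ Icc θlow θhat
      · have hθc : θ ≤ c := le_trans hle.2 (min_le_left _ _)
        rw [Set.indicator_of_mem hle]
        exact max_eq_left (by linarith)
      · rw [Set.indicator_of_notMem hle]
        have hgt : θhat < θ := by
          rcases not_and_or.mp hle with h | h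
          · exact absurd hθm.1 h
          · exact lt_of_not_ge h
        have hcθ : c < θ := by
          rcases le_or_gt c θhigh with h | h
          · rwa [hθhatdef, min_eq_left h] at hgt
          · exfalso
            rw [hθhatdef, min_eq_right h.le] at hgt
            exact absurd hθm.2 (not_le.mpr hgt)
        exact max_eq_right (by linarith)
    have hneg : ∫ θ in Icc θlow θhat, (c - θ) ∂F
        = - ∫ θ in Icc θlow θhat, (θ - c) ∂F := by
      rw [← integral_neg]
      congr 1 with θ; ring
    rw [hmain, hneg]
    linarith [hsplit ▸ key]
end

section
/- (Proposition 2: robustly optimal regulation of an uncertain externality is a noncontingent quantity rule.) Fix B > 0 and assume ∫_Θ C(B,θ) dF(θ) < ∞. Then: (i) for every nonincreasing function q : Θ → [0,B], inf over m ∈ M₀ of ∫_Θ [m(θ) q(θ) − C(q(θ),θ)] dF(θ) equals μ · essinf_F q − ∫_Θ C(q(θ),θ) dF(θ), and this is at most μ q̲ − ∫_Θ C(q̲, θ) dF(θ) where q̲ := essinf_F q; consequently (ii) the supremum over all nonincreasing q : Θ → [0,B] of the worst-case welfare inf over m ∈ M₀ of ∫_Θ [m(θ) q(θ) − C(q(θ),θ)]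 dF(θ) equals the maximum over constants x ∈ [0,B] of μ x − ∫_Θ C(x,θ) dF(θ), attained by a constant allocation. -/
open MeasureTheory Set

noncomputable section

/-- Worst-case welfare of an abatement schedule `q` against cost function `C`. -/
def worstAbate (F : Measure ℝ) (μ : ℝ) (C : ℝ → ℝ → ℝ) (q : ℝ → ℝ) : ℝ :=
  sInf ((fun m => ∫ θ, (m θ * q θ - C (q θ) θ) ∂F) '' M0 F μ)

/-- Nonincreasing abatement schedules with values in `[0,B]`. -/
def Qdown (θlow θhigh B : ℝ) : Set (ℝ → ℝ) :=
  {q | AntitoneOn q (Icc θlow θhigh) ∧ ∀ θ ∈ Icc θlow θhigh, q θ ∈ Icc 0 B}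

/-- **Proposition 2.** Robustly optimal regulation of an uncertain externality
is a noncontingent quantity rule: the worst case of any nonincreasing schedule is governed by
its essential infimum, and the optimal worst-case welfare is attained by a constant
allocation. -/
theorem robust_regulation_noncontingent_quantity_rule
    (θlow θhigh μ B : ℝ) (hθlow : 0 ≤ θlow) (hθ : θlow < θhigh) (hμ : 0 < μ) (hB : 0 < B)
    (F : Measure ℝ) [IsProbabilityMeasure F] (hsupp : F (Icc θlow θhigh)ᶜ = 0)
    (C : ℝ → ℝ → ℝ)
    (hC_meas : Measurable fun p : ℝ × ℝ => C p.1 p.2)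
    (hC_nonneg : ∀ x : ℝ, 0 ≤ x → ∀ θ ∈ Icc θlow θhigh, 0 ≤ C x θ)
    (hC_cont : ∀ θ ∈ Icc θlow θhigh, ContinuousOn (fun x => C x θ) (Ici 0))
    (hC_mono : ∀ θ ∈ Icc θlow θhigh, MonotoneOn (fun x => C x θ) (Ici 0))
    (hCB : Integrable (fun θ => C B θ) F) :
    -- (i) worst case of a nonincreasing schedule
    (∀ q ∈ Qdown θlow θhigh B,
      worstAbate F μ C q = μ * essInf q F - ∫ θ, C (q θ) θ ∂F ∧
      μ * essInf q F - ∫ θ, C (q θ) θ ∂F ≤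
        μ * essInf q F - ∫ θ, C (essInf q F) θ ∂F) ∧
    -- (ii) the optimal worst-case welfare equals the best constant rule and is attained
    sSup ((fun q => worstAbate F μ C q) '' Qdown θlow θhigh B) =
      sSup ((fun x => μ * x - ∫ θ, C x θ ∂F) '' Icc (0:ℝ) B) ∧
    ∃ x ∈ Icc (0:ℝ) B,
      (μ * x - ∫ θ, C x θ ∂F) =
        sSup ((fun x => μ * x - ∫ θ, C x θ ∂F) '' Icc (0:ℝ) B) ∧
      worstAbate F μ C (fun _ => x) =
        sSup ((fun q => worstAbate F μ C q) '' Qdown θlow θhigh B) := by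
  have hF0 : F ≠ 0 := by
    intro h
    have h1 : F Set.univ = 1 := measure_univ
    rw [h] at h1
    simp at h1
  haveI : (MeasureTheory.ae F).NeBot := ae_neBot.2 hF0
  have haeI : ∀ᵐ θ ∂F, θ ∈ Icc θlow θhigh := by
    rw [ae_iff]; exact hsupp
  -- integrability of constant allocations
  have hCx_int : ∀ x ∈ Icc (0:ℝ) B, Integrable (fun θ => C x θ) F := by
    intro x hx
    refine Integrable.mono hCB
      ((hC_meas.comp (measurable_const.prodMk measurable_id)).aestronglyMeasurable) ?_
    filter_upwards [haeI] with θ hI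
    have h1 := hC_nonneg x hx.1 θ hI
    have h2 := hC_mono θ hI (mem_Ici.2 hx.1) (mem_Ici.2 hB.le) hx.2
    have h3 := hC_nonneg B hB.le θ hI
    rw [Real.norm_eq_abs, Real.norm_eq_abs, abs_of_nonneg h1, abs_of_nonneg h3]
    exact h2
  -- key per-schedule fact
  have key : ∀ q ∈ Qdown θlow θhigh B,
      worstAbate F μ C q = μ * essInf q F - ∫ θ, C (q θ) θ ∂F ∧
      ∫ θ, C (essInf q F) θ ∂F ≤ ∫ θ, C (q θ) θ ∂F ∧
      essInf q F ∈ Icc (0:ℝ) B := by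
    rintro q ⟨hq_anti, hq_mem⟩
    set L := essInf q F with hLdef
    have hLlim : L = Filter.liminf q (MeasureTheory.ae F) := rfl
    -- measurable version of q
    set q' : ℝ → ℝ := fun θ => q (max θlow (min θ θhigh)) with hq'def
    have hclamp : ∀ θ, max θlow (min θ θhigh) ∈ Icc θlow θhigh := fun θ =>
      ⟨le_max_left _ _, max_le hθ.le (min_le_right _ _)⟩
    have hq'_anti : Antitone q' := by
      intro a b hab
      exact hq_anti (hclamp a) (hclamp b) (max_le_max le_rfl (min_le_min hab le_rfl))
    have hq'_meas : Measurable q' := hq'_anti.measurable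
    have hq'_ae : q' =ᵐ[F] q := by
      filter_upwards [haeI] with θ hI
      simp only [hq'def]
      rw [min_eq_left hI.2, max_eq_right hI.1]
    have hq_aesm : AEStronglyMeasurable q F :=
      hq'_meas.aestronglyMeasurable.congr hq'_ae
    have hq01 : ∀ᵐ θ ∂F, q θ ∈ Icc (0:ℝ) B := by
      filter_upwards [haeI] with θ hI
      exact hq_mem θ hI
    have hbdd_ge : Filter.IsBoundedUnder (· ≥ ·) (MeasureTheory.ae F) q :=
      Filter.isBoundedUnder_of_eventually_ge (hq01.mono fun θ h => h.1)
    have hcobdd : Filter.IsCoboundedUnder (· ≥ ·) (MeasureTheory.ae F) q :=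
      Filter.isCoboundedUnder_ge_of_eventually_le _ (hq01.mono fun θ h => h.2)
    have hL0 : 0 ≤ L := by
      rw [hLlim]
      exact Filter.le_liminf_of_le hcobdd (hq01.mono fun θ h => h.1)
    have hLB : L ≤ B := by
      rw [hLlim]
      exact Filter.liminf_le_of_frequently_le ((hq01.mono fun θ h => h.2).frequently) hbdd_ge
    have hLq : ∀ᵐ θ ∂F, L ≤ q θ := ae_essInf_le hbdd_ge
    -- integrability of the cost along q
    have hCq_int : Integrable (fun θ => C (q θ) θ) F := by
      refine Integrable.mono hCB ?_ ?_
      · exact ((hC_meas.comp (hq'_meas.prodMk measurable_id)).aestronglyMeasurable).congr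
          (hq'_ae.mono fun θ h => by simp only [Function.comp_apply, id_eq, h])
      · filter_upwards [haeI, hq01] with θ hI h01
        have h1 : 0 ≤ C (q θ) θ := hC_nonneg _ h01.1 θ hI
        have h2 : C (q θ) θ ≤ C B θ :=
          hC_mono θ hI (mem_Ici.2 h01.1) (mem_Ici.2 hB.le) h01.2
        have h3 := hC_nonneg B hB.le θ hI
        rw [Real.norm_eq_abs, Real.norm_eq_abs, abs_of_nonneg h1, abs_of_nonneg h3]
        exact h2
    have hCLq : ∫ θ, C L θ ∂F ≤ ∫ θ, C (q θ) θ ∂F := by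
      refine integral_mono_ae (hCx_int L ⟨hL0, hLB⟩) hCq_int ?_
      filter_upwards [haeI, hq01, hLq] with θ hI h01 hLle
      exact hC_mono θ hI (mem_Ici.2 hL0) (mem_Ici.2 h01.1) hLle
    -- any member of M0 is integrable, as is its product with q
    have hM0 : ∀ m ∈ M0 F μ, Integrable m F ∧ Integrable (fun θ => m θ * q θ) F := by
      rintro m ⟨hm_meas, hm_nn, hm_int⟩
      have hmi : Integrable m F := by
        by_contra h
        rw [integral_undef h] at hm_int
        exact hμ.ne' hm_int.symm
      refine ⟨hmi, ?_⟩
      refine Integrable.mono (hmi.const_mul B) (hm_meas.aestronglyMeasurable.mul hq_aesm) ?_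
      filter_upwards [hq01] with θ h01
      rw [Real.norm_eq_abs, Real.norm_eq_abs, abs_of_nonneg (mul_nonneg (hm_nn θ) h01.1),
        abs_of_nonneg (mul_nonneg hB.le (hm_nn θ))]
      calc m θ * q θ ≤ m θ * B := mul_le_mul_of_nonneg_left h01.2 (hm_nn θ)
        _ = B * m θ := mul_comm _ _
    -- lower bound on the worst case
    have hlb : ∀ v ∈ (fun m => ∫ θ, (m θ * q θ - C (q θ) θ) ∂F) '' M0 F μ,
        μ * L - ∫ θ, C (q θ) θ ∂F ≤ v := by
      rintro v ⟨m, hm, rfl⟩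
      obtain ⟨hmi, hmqi⟩ := hM0 m hm
      obtain ⟨hm_meas, hm_nn, hm_int⟩ := hm
      show μ * L - ∫ θ, C (q θ) θ ∂F ≤ ∫ θ, (m θ * q θ - C (q θ) θ) ∂F
      rw [integral_sub hmqi hCq_int]
      have h1 : ∫ θ, L * m θ ∂F ≤ ∫ θ, m θ * q θ ∂F := by
        refine integral_mono_ae (hmi.const_mul L) hmqi ?_
        filter_upwards [hLq] with θ hLle
        calc L * m θ = m θ * L := mul_comm _ _
          _ ≤ m θ * q θ := mul_le_mul_of_nonneg_left hLle (hm_nn θ)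
      rw [integral_const_mul, hm_int] at h1
      have : μ * L ≤ ∫ θ, m θ * q θ ∂F := by linarith [h1]
      linarith
    -- upper approximations
    have hub : ∀ ε : ℝ, 0 < ε → ∃ v ∈ (fun m => ∫ θ, (m θ * q θ - C (q θ) θ) ∂F) '' M0 F μ,
        v ≤ μ * (L + ε) - ∫ θ, C (q θ) θ ∂F := by
      intro ε hε
      set A : Set ℝ := {θ | q' θ < L + ε} with hA
      have hAm : MeasurableSet A := measurableSet_lt hq'_meas measurable_const
      have hFA : F A ≠ 0 := by
        intro h0
        have h2 : ∀ᵐ θ ∂F, ¬ (q' θ < L + ε) := by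
          rw [ae_iff]; simpa using h0
        have hae' : ∀ᵐ θ ∂F, L + ε ≤ q θ := by
          filter_upwards [h2, hq'_ae] with θ h1 heq
          rw [← heq]; exact not_lt.1 h1
        have hcon : L + ε ≤ L := by
          rw [hLlim]
          exact Filter.le_liminf_of_le hcobdd hae'
        linarith
      have hFApos : 0 < (F A).toReal := ENNReal.toReal_pos hFA (measure_ne_top F A)
      set c : ℝ := μ / (F A).toReal with hc
      have hcpos : 0 < c := div_pos hμ hFApos
      set m : ℝ → ℝ := A.indicator (fun _ => c) with hm
      have hmM0 : m ∈ M0 F μ := by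
        refine ⟨measurable_const.indicator hAm, fun θ => ?_, ?_⟩
        · exact Set.indicator_nonneg (fun _ _ => hcpos.le) θ
        · rw [hm, integral_indicator_const c hAm, smul_eq_mul, hc, Measure.real]
          field_simp
      refine ⟨_, ⟨m, hmM0, rfl⟩, ?_⟩
      obtain ⟨hmi, hmqi⟩ := hM0 m hmM0
      show ∫ θ, (m θ * q θ - C (q θ) θ) ∂F ≤ μ * (L + ε) - ∫ θ, C (q θ) θ ∂F
      rw [integral_sub hmqi hCq_int]
      have h1 : ∫ θ, m θ * q θ ∂F ≤ ∫ θ, A.indicator (fun _ => c * (L + ε)) θ ∂F := by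
        refine integral_mono_ae hmqi ((integrable_const (c * (L + ε))).indicator hAm) ?_
        filter_upwards [hq'_ae] with θ heq
        by_cases hθA : θ ∈ A
        · rw [hm]
          rw [Set.indicator_of_mem hθA, Set.indicator_of_mem hθA]
          rw [← heq]
          exact mul_le_mul_of_nonneg_left (le_of_lt hθA) hcpos.le
        · rw [hm]
          rw [Set.indicator_of_notMem hθA, Set.indicator_of_notMem hθA, zero_mul]
      rw [integral_indicator_const _ hAm, smul_eq_mul, hc, Measure.real] at h1
      have h2 : (F A).toReal * (μ / (F A).toReal * (L + ε)) = μ * (L + ε) := by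
        field_simp
      rw [h2] at h1
      linarith
    have hne : ((fun m => ∫ θ, (m θ * q θ - C (q θ) θ) ∂F) '' M0 F μ).Nonempty := by
      refine ⟨_, ⟨fun _ => μ, ⟨measurable_const, fun _ => hμ.le, by simp⟩, rfl⟩⟩
    have hbddbelow : BddBelow ((fun m => ∫ θ, (m θ * q θ - C (q θ) θ) ∂F) '' M0 F μ) :=
      ⟨_, hlb⟩
    have hInf : worstAbate F μ C q = μ * L - ∫ θ, C (q θ) θ ∂F := by
      rw [worstAbate]
      apply le_antisymm
      · refine le_of_forall_pos_le_add fun ε hε => ?_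
        obtain ⟨v, hv, hvle⟩ := hub (ε / μ) (div_pos hε hμ)
        refine (csInf_le hbddbelow hv).trans (hvle.trans ?_)
        have hεμ : μ * (ε / μ) = ε := by field_simp
        have : μ * (L + ε / μ) = μ * L + ε := by rw [mul_add, hεμ]
        linarith
      · exact le_csInf hne hlb
    exact ⟨hInf, hCLq, ⟨hL0, hLB⟩⟩
  -- constants are admissible schedules
  have hconstQ : ∀ x ∈ Icc (0:ℝ) B, (fun _ : ℝ => x) ∈ Qdown θlow θhigh B :=
    fun x hx => ⟨fun _ _ _ _ _ => le_rfl, fun θ _ => hx⟩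
  have hworst_const : ∀ x ∈ Icc (0:ℝ) B,
      worstAbate F μ C (fun _ => x) = μ * x - ∫ θ, C x θ ∂F := by
    intro x hx
    have h := (key _ (hconstQ x hx)).1
    rw [essInf_const x hF0] at h
    exact h
  -- continuity of the constant-rule objective
  have hg_cont : ContinuousOn (fun x => μ * x - ∫ θ, C x θ ∂F) (Icc (0:ℝ) B) := by
    apply ContinuousOn.sub ((continuous_const.mul continuous_id).continuousOn)
    apply continuousOn_of_dominated (bound := fun θ => C B θ)
    · intro x _
      exact (hC_meas.comp (measurable_const.prodMk measurable_id)).aestronglyMeasurable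
    · intro x hx
      filter_upwards [haeI] with θ hI
      have h1 := hC_nonneg x hx.1 θ hI
      have h2 := hC_mono θ hI (mem_Ici.2 hx.1) (mem_Ici.2 hB.le) hx.2
      rw [Real.norm_eq_abs, abs_of_nonneg h1]
      exact h2
    · exact hCB
    · filter_upwards [haeI] with θ hI
      exact (hC_cont θ hI).mono Icc_subset_Ici_self
  obtain ⟨xs, hxsI, hxsmax⟩ :=
    isCompact_Icc.exists_isMaxOn (nonempty_Icc.2 hB.le) hg_cont
  have hsup2 : sSup ((fun x => μ * x - ∫ θ, C x θ ∂F) '' Icc (0:ℝ) B) =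
      μ * xs - ∫ θ, C xs θ ∂F := by
    apply IsGreatest.csSup_eq
    constructor
    · exact mem_image_of_mem _ hxsI
    · rintro v ⟨y, hy, rfl⟩
      exact hxsmax hy
  have hsup1 : sSup ((fun q => worstAbate F μ C q) '' Qdown θlow θhigh B) =
      μ * xs - ∫ θ, C xs θ ∂F := by
    apply IsGreatest.csSup_eq
    constructor
    · exact ⟨_, hconstQ xs hxsI, hworst_const xs hxsI⟩
    · rintro v ⟨q, hq, rfl⟩
      obtain ⟨h1, h2, h3⟩ := key q hq
      have h4 : μ * essInf q F - ∫ θ, C (essInf q F) θ ∂F ≤ μ * xs - ∫ θ, C xs θ ∂F :=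
        hxsmax h3
      simp only []
      rw [h1]
      linarith
  refine ⟨fun q hq => ⟨(key q hq).1, by linarith [(key q hq).2.1]⟩,
    hsup1.trans hsup2.symm, xs, hxsI, hsup2.symm, ?_⟩
  rw [hsup1]
  exact hworst_const xs hxsI
end
end

section
/- (Proposition 3: random non-price allocation is robustly optimal under costly screening.) Call a pair (q,t) feasible if q : Θ → [0,1] is nondecreasing with ∫_Θ q dF ≤ Q, t : Θ → [0,∞), and the envelope condition holds: θ q(θ) − t(θ) = θlow · q(θlow) − t(θlow) + ∫_{θlow}^{θ} q(s) ds for all θ ∈ Θ. Write U(θ) := θ q(θ) − t(θ). Then: (i) for every feasible (q,t), inf over m ∈ M₀ of ∫_Θ m(θ) U(θ) dF(θ) ≤ μ · θlow · Q; (ii) the pair q ≡ Q, t ≡ 0 is feasible and attains inf over m ∈ M₀ of ∫_Θ m(θ) U(θ) dF(θ) = μ · θlow · Q; and (iii) if θlow > 0, then any feasible (q,t) whose worst-case value equals μ · θlow · Q satisfies q = Q F-almost everywhere. -/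
open MeasureTheory Set

noncomputable section

/-- A feasible costly-screening mechanism: a nondecreasing allocation `q : Θ → [0,1]`
respecting the capacity constraint, nonnegative wait times `t`, and the envelope condition. -/
def Feasible (θlow θhigh Q : ℝ) (F : Measure ℝ) (q t : ℝ → ℝ) : Prop :=
  MonotoneOn q (Icc θlow θhigh) ∧ (∀ θ ∈ Icc θlow θhigh, q θ ∈ Icc 0 1) ∧
  (∫ θ, q θ ∂F) ≤ Q ∧ (∀ θ ∈ Icc θlow θhigh, 0 ≤ t θ) ∧
  ∀ θ ∈ Icc θlow θhigh,
    θ * q θ - t θ = θlow * q θlow - t θlow + ∫ s in θlow..θ, q s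

/-- Worst-case aggregate surplus of a mechanism `(q,t)` with induced utility
`U θ = θ q θ - t θ`. -/
def worstScreen (F : Measure ℝ) (μ : ℝ) (q t : ℝ → ℝ) : ℝ :=
  sInf ((fun m => ∫ θ, m θ * (θ * q θ - t θ) ∂F) '' M0 F μ)

lemma ae_mem_Icc (θlow θhigh : ℝ) (F : Measure ℝ) (f : ℝ → ℝ)
    (hF : F = (volume.restrict (Icc θlow θhigh)).withDensity fun θ => ENNReal.ofReal (f θ)) :
    ∀ᵐ θ ∂F, θ ∈ Icc θlow θhigh := by
  rw [ae_iff]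
  have : {θ | θ ∉ Icc θlow θhigh} = (Icc θlow θhigh)ᶜ := rfl
  rw [this, hF, withDensity_apply _ measurableSet_Icc.compl,
    Measure.restrict_restrict measurableSet_Icc.compl, compl_inter_self,
    Measure.restrict_empty, lintegral_zero_measure]

lemma F_pos (θlow θhigh : ℝ) (F : Measure ℝ) (f : ℝ → ℝ)
    (hf_cont : ContinuousOn f (Icc θlow θhigh))
    (hf_pos : ∀ θ ∈ Icc θlow θhigh, 0 < f θ)
    (hF : F = (volume.restrict (Icc θlow θhigh)).withDensity fun θ => ENNReal.ofReal (f θ))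
    (b : ℝ) (hb1 : θlow < b) (hb2 : b ≤ θhigh) : 0 < F (Icc θlow b) := by
  obtain ⟨x, hx, hxmin⟩ := (isCompact_Icc (a := θlow) (b := θhigh)).exists_isMinOn
    ⟨θlow, le_refl _, le_of_lt (lt_of_lt_of_le hb1 hb2)⟩ hf_cont
  have hsub : Icc θlow b ⊆ Icc θlow θhigh := Icc_subset_Icc le_rfl hb2
  have hfx : 0 < f x := hf_pos x hx
  rw [hF, withDensity_apply _ measurableSet_Icc,
    Measure.restrict_restrict measurableSet_Icc, inter_eq_self_of_subset_left hsub]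
  calc (0:ENNReal) < ENNReal.ofReal (f x) * volume (Icc θlow b) := by
        apply ENNReal.mul_pos
        · simp [ENNReal.ofReal_pos, hfx]
        · simp [Real.volume_Icc]; linarith
    _ = ∫⁻ θ in Icc θlow b, ENNReal.ofReal (f x) := by
        rw [setLIntegral_const]
    _ ≤ ∫⁻ θ in Icc θlow b, ENNReal.ofReal (f θ) := by
        apply lintegral_mono_ae
        rw [ae_restrict_iff' measurableSet_Icc]
        filter_upwards with θ hθ using ENNReal.ofReal_le_ofReal (hxmin (hsub hθ))

lemma M0_integrable {F : Measure ℝ} {μ : ℝ} (hμ : 0 < μ) {m : ℝ → ℝ} (hm : m ∈ M0 F μ) :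
    Integrable m F := by
  by_contra h
  have := hm.2.2
  rw [integral_undef h] at this
  linarith

lemma integral_lower_bound (F : Measure ℝ) (μ : ℝ) (hμ : 0 < μ)
    (U : ℝ → ℝ) (c C : ℝ) (hmeas : AEStronglyMeasurable U F) (hbd : ∀ᵐ θ ∂F, ‖U θ‖ ≤ C)
    (hc : ∀ᵐ θ ∂F, c ≤ U θ) {m : ℝ → ℝ} (hm : m ∈ M0 F μ) :
    μ * c ≤ ∫ θ, m θ * U θ ∂F := by
  have hmint : Integrable m F := M0_integrable hμ hm
  have hint : Integrable (fun θ => m θ * U θ) F := by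
    have := Integrable.bdd_mul (f := U) (g := m) (c := C) hmint hmeas hbd
    simpa [mul_comm] using this
  have h1 : Integrable (fun θ => m θ * c) F := hmint.mul_const c
  calc μ * c = ∫ θ, m θ * c ∂F := by rw [integral_mul_const, hm.2.2]
    _ ≤ ∫ θ, m θ * U θ ∂F := by
        apply integral_mono_ae h1 hint
        filter_upwards [hc] with θ hθ
        exact mul_le_mul_of_nonneg_left hθ (hm.2.1 θ)

lemma bump_upper (θlow b μ C : ℝ) (hμ : 0 < μ)
    (F : Measure ℝ) [IsProbabilityMeasure F] (hb : 0 < F (Icc θlow b))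
    (U : ℝ → ℝ) (K : ℝ) (hmeas : AEStronglyMeasurable U F) (hbd : ∀ᵐ θ ∂F, ‖U θ‖ ≤ C)
    (hK : ∀ᵐ θ ∂F, θ ∈ Icc θlow b → U θ ≤ K) :
    ∃ m ∈ M0 F μ, ∫ θ, m θ * U θ ∂F ≤ μ * K := by
  set s := Icc θlow b with hs
  set c := (F s).toReal with hc
  have hcpos : 0 < c := ENNReal.toReal_pos hb.ne' (measure_ne_top F s)
  have hdiv : 0 ≤ μ / c := le_of_lt (div_pos hμ hcpos)
  refine ⟨fun θ => (μ / c) * s.indicator 1 θ, ⟨?_, ?_, ?_⟩, ?_⟩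
  · exact measurable_const.mul ((measurable_one).indicator measurableSet_Icc)
  · intro θ
    exact mul_nonneg hdiv (Set.indicator_nonneg (fun _ _ => zero_le_one) θ)
  · rw [integral_const_mul, integral_indicator_one measurableSet_Icc, measureReal_def, ← hc]
    field_simp
  · have hind_int : Integrable (fun θ => (μ / c) * s.indicator 1 θ) F := by
      exact (((integrable_const (1:ℝ)).indicator measurableSet_Icc)).const_mul _
    have hint : Integrable (fun θ => ((μ / c) * s.indicator 1 θ) * U θ) F := by
      have := Integrable.bdd_mul (f := U) (g := fun θ => (μ / c) * s.indicator 1 θ)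
        (c := C) hind_int hmeas hbd
      simpa [mul_comm] using this
    have h2 : Integrable (fun θ => (μ / c) * K * s.indicator 1 θ) F :=
      ((integrable_const (1:ℝ)).indicator measurableSet_Icc).const_mul _
    calc ∫ θ, ((μ / c) * s.indicator 1 θ) * U θ ∂F
        ≤ ∫ θ, (μ / c) * K * s.indicator 1 θ ∂F := by
          apply integral_mono_ae hint h2
          filter_upwards [hK] with θ hθ
          by_cases hmem : θ ∈ s
          · simp only [Set.indicator_of_mem hmem, Pi.one_apply, mul_one]
            exact mul_le_mul_of_nonneg_left (hθ hmem) hdiv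
          · simp [Set.indicator_of_notMem hmem]
      _ = μ * K := by
          rw [integral_const_mul, integral_indicator_one measurableSet_Icc, measureReal_def, ← hc]
          field_simp

lemma screen_chain
    (θlow θhigh μ Q : ℝ) (hθlow : 0 ≤ θlow) (hθ : θlow < θhigh) (hμ : 0 < μ)
    (F : Measure ℝ) [IsProbabilityMeasure F]
    (f : ℝ → ℝ) (hf_cont : ContinuousOn f (Icc θlow θhigh))
    (hf_pos : ∀ θ ∈ Icc θlow θhigh, 0 < f θ)
    (hF : F = (volume.restrict (Icc θlow θhigh)).withDensity fun θ => ENNReal.ofReal (f θ))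
    (q t : ℝ → ℝ) (hfeas : Feasible θlow θhigh Q F q t) :
    worstScreen F μ q t ≤ μ * (θlow * q θlow) ∧ q θlow ≤ ∫ θ, q θ ∂F ∧
    (∀ᵐ θ ∂F, q θlow ≤ q θ) ∧ Integrable q F := by
  obtain ⟨hmono, hrange, hcap, ht, henv⟩ := hfeas
  have haeIcc := ae_mem_Icc θlow θhigh F f hF
  have hlowmem : θlow ∈ Icc θlow θhigh := ⟨le_rfl, hθ.le⟩
  -- measurable monotone version of q
  set proj : ℝ → ℝ := fun θ => max θlow (min θ θhigh) with hproj
  have hproj_mem : ∀ θ, proj θ ∈ Icc θlow θhigh := fun θ =>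
    ⟨le_max_left _ _, max_le hθ.le (min_le_right _ _)⟩
  have hproj_mono : Monotone proj := fun a b hab =>
    max_le_max le_rfl (min_le_min hab le_rfl)
  set q' : ℝ → ℝ := fun θ => q (proj θ) with hq'
  have hq'mono : Monotone q' := fun a b hab =>
    hmono (hproj_mem a) (hproj_mem b) (hproj_mono hab)
  have hq'meas : Measurable q' := hq'mono.measurable
  have hq'eq : ∀ θ ∈ Icc θlow θhigh, q' θ = q θ := by
    intro θ hθm
    have : proj θ = θ := by
      simp only [hproj]
      rw [min_eq_left hθm.2, max_eq_right hθm.1]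
    simp [hq', this]
  have hq'range : ∀ θ, q' θ ∈ Icc (0:ℝ) 1 := fun θ => hrange _ (hproj_mem θ)
  have hq'ae : q' =ᵐ[F] q := by
    filter_upwards [haeIcc] with θ hθm using hq'eq θ hθm
  have hq'lb : ∀ θ, q θlow ≤ q' θ := fun θ =>
    hmono hlowmem (hproj_mem θ) (le_max_left _ _)
  -- interval integrability of q'
  have hq'ii : ∀ a b : ℝ, IntervalIntegrable q' volume a b := by
    intro a b
    apply IntervalIntegrable.mono_fun' (g := fun _ => (1:ℝ)) intervalIntegrable_const
      hq'meas.aestronglyMeasurable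
    filter_upwards with θ
    rw [Real.norm_eq_abs, abs_le]
    exact ⟨by linarith [(hq'range θ).1], (hq'range θ).2⟩
  set h' : ℝ → ℝ := fun θ => ∫ s in θlow..θ, q' s with hh'
  have hh'cont : Continuous h' := intervalIntegral.continuous_primitive hq'ii θlow
  set u0 : ℝ := θlow * q θlow - t θlow with hu0
  have hU_on : ∀ θ ∈ Icc θlow θhigh, θ * q θ - t θ = u0 + h' θ := by
    intro θ hθm
    rw [henv θ hθm, hu0]
    congr 1
    apply intervalIntegral.integral_congr
    intro x hx
    rw [uIcc_of_le hθm.1] at hx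
    exact (hq'eq x ⟨hx.1, le_trans hx.2 hθm.2⟩).symm
  have hh'nonneg : ∀ θ, θlow ≤ θ → 0 ≤ h' θ := fun θ hθm =>
    intervalIntegral.integral_nonneg hθm (fun x _ => (hq'range x).1)
  have hh'bd : ∀ θ, θlow ≤ θ → h' θ ≤ θ - θlow := by
    intro θ hθm
    calc h' θ ≤ ∫ s in θlow..θ, (1:ℝ) :=
          intervalIntegral.integral_mono_on hθm (hq'ii _ _) intervalIntegrable_const
            (fun x _ => (hq'range x).2)
      _ = θ - θlow := by simp
  set U : ℝ → ℝ := fun θ => θ * q θ - t θ with hU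
  set V : ℝ → ℝ := fun θ => u0 + h' θ with hV
  have hVcont : Continuous V := continuous_const.add hh'cont
  have hUV : U =ᵐ[F] V := by
    filter_upwards [haeIcc] with θ hθm using hU_on θ hθm
  have hUmeas : AEStronglyMeasurable U F :=
    hVcont.aestronglyMeasurable.congr hUV.symm
  set C : ℝ := |u0| + (θhigh - θlow) with hC
  have hUbd : ∀ᵐ θ ∂F, ‖U θ‖ ≤ C := by
    filter_upwards [haeIcc] with θ hθm
    have hUeq : U θ = u0 + h' θ := hU_on θ hθm
    rw [Real.norm_eq_abs, hUeq]
    have h1 := hh'nonneg θ hθm.1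
    have h2 := hh'bd θ hθm.1
    rw [abs_le]
    constructor
    · have := neg_abs_le u0; linarith [hθm.2]
    · have := le_abs_self u0; linarith [hθm.2]
  have hUlb : ∀ᵐ θ ∂F, u0 ≤ U θ := by
    filter_upwards [haeIcc] with θ hθm
    have hUeq : U θ = u0 + h' θ := hU_on θ hθm
    rw [hUeq]
    linarith [hh'nonneg θ hθm.1]
  -- bddBelow of the image
  have hbdd : BddBelow ((fun m => ∫ θ, m θ * (θ * q θ - t θ) ∂F) '' M0 F μ) := by
    refine ⟨μ * u0, ?_⟩
    rintro x ⟨m, hm, rfl⟩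
    exact integral_lower_bound F μ hμ U u0 C hUmeas hUbd hUlb hm
  -- integrability of q
  have hqint : Integrable q F := by
    have : Integrable q' F := by
      apply Integrable.mono' (integrable_const (1:ℝ)) hq'meas.aestronglyMeasurable
      filter_upwards with θ
      rw [Real.norm_eq_abs, abs_le]
      exact ⟨by linarith [(hq'range θ).1], (hq'range θ).2⟩
    exact this.congr hq'ae
  -- lower bound on capacity
  have hqlb : q θlow ≤ ∫ θ, q θ ∂F := by
    have h1 : ∫ θ, q θ ∂F = ∫ θ, q' θ ∂F := integral_congr_ae hq'ae.symm
    rw [h1]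
    calc q θlow = ∫ _θ, q θlow ∂F := by simp
      _ ≤ ∫ θ, q' θ ∂F := by
          apply integral_mono_ae (integrable_const _) (hqint.congr hq'ae.symm)
          filter_upwards with θ using hq'lb θ
  -- the key upper bound on worstScreen
  have hkey : worstScreen F μ q t ≤ μ * u0 := by
    apply le_of_forall_pos_le_add
    intro ε hε
    set δ : ℝ := min (ε / μ) (θhigh - θlow) with hδ
    have hδpos : 0 < δ := lt_min (div_pos hε hμ) (by linarith)
    set b : ℝ := θlow + δ with hb
    have hbpos : 0 < F (Icc θlow b) :=
      F_pos θlow θhigh F f hf_cont hf_pos hF b (by linarith)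
        (by rw [hb]; linarith [min_le_right (ε / μ) (θhigh - θlow)])
    have hK : ∀ᵐ θ ∂F, θ ∈ Icc θlow b → U θ ≤ u0 + δ := by
      filter_upwards [haeIcc] with θ hθm hmem
      have hUeq : U θ = u0 + h' θ := hU_on θ hθm
      rw [hUeq]
      have := hh'bd θ hθm.1
      have : h' θ ≤ δ := by linarith [hmem.2]
      linarith
    obtain ⟨m, hm, hmle⟩ := bump_upper θlow b μ C hμ F hbpos U (u0 + δ) hUmeas hUbd hK
    have : worstScreen F μ q t ≤ μ * (u0 + δ) :=
      le_trans (csInf_le hbdd ⟨m, hm, rfl⟩) hmle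
    have hδε : μ * δ ≤ ε := by
      have h3 : δ ≤ ε / μ := min_le_left _ _
      calc μ * δ ≤ μ * (ε / μ) := by nlinarith
        _ = ε := by field_simp
    nlinarith
  refine ⟨?_, hqlb, ?_, hqint⟩
  · calc worstScreen F μ q t ≤ μ * u0 := hkey
      _ ≤ μ * (θlow * q θlow) := by
          have := ht θlow hlowmem
          nlinarith
  · filter_upwards [haeIcc] with θ hθm
    rw [← hq'eq θ hθm]
    exact hq'lb θ

/-- **Proposition 3.** Random non-price allocation is robustly optimal under
costly screening: every feasible mechanism has worst-case value at most `μ θlow Q`, the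
lottery `(q,t) = (Q,0)` attains it, and when `θlow > 0` it is the unique optimum F-a.e. -/

theorem lottery_robustly_optimal_costly_screening
    (θlow θhigh μ Q : ℝ) (hθlow : 0 ≤ θlow) (hθ : θlow < θhigh) (hμ : 0 < μ)
    (hQ0 : 0 < Q) (hQ1 : Q < 1)
    (F : Measure ℝ) [IsProbabilityMeasure F]
    (f : ℝ → ℝ) (hf_cont : ContinuousOn f (Icc θlow θhigh))
    (hf_pos : ∀ θ ∈ Icc θlow θhigh, 0 < f θ)
    (hF : F = (volume.restrict (Icc θlow θhigh)).withDensity fun θ => ENNReal.ofReal (f θ)) :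
    -- (i) upper bound on the worst-case value of every feasible mechanism
    (∀ q t : ℝ → ℝ, Feasible θlow θhigh Q F q t →
      worstScreen F μ q t ≤ μ * θlow * Q) ∧
    -- (ii) the lottery (q ≡ Q, t ≡ 0) is feasible and attains the bound
    (Feasible θlow θhigh Q F (fun _ => Q) (fun _ => 0) ∧
      worstScreen F μ (fun _ => Q) (fun _ => 0) = μ * θlow * Q) ∧
    -- (iii) uniqueness when θlow > 0
    (0 < θlow →
      ∀ q t : ℝ → ℝ, Feasible θlow θhigh Q F q t →
        worstScreen F μ q t = μ * θlow * Q →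
        q =ᵐ[F] fun _ => Q) := by
  have haeIcc := ae_mem_Icc θlow θhigh F f hF
  -- Part (i)
  have hi : ∀ q t : ℝ → ℝ, Feasible θlow θhigh Q F q t →
      worstScreen F μ q t ≤ μ * θlow * Q := by
    intro q t hfeas
    obtain ⟨h1, h2, h3, h4⟩ :=
      screen_chain θlow θhigh μ Q hθlow hθ hμ F f hf_cont hf_pos hF q t hfeas
    have hcap := hfeas.2.2.1
    have hq : q θlow ≤ Q := le_trans h2 hcap
    calc worstScreen F μ q t ≤ μ * (θlow * q θlow) := h1
      _ ≤ μ * θlow * Q := by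
          nlinarith [mul_nonneg (mul_nonneg hμ.le hθlow) (sub_nonneg.mpr hq)]
  -- Feasibility of the lottery
  have hfeasL : Feasible θlow θhigh Q F (fun _ => Q) (fun _ => 0) := by
    refine ⟨monotoneOn_const, fun θ _ => ⟨hQ0.le, hQ1.le⟩, ?_, fun θ _ => le_rfl, ?_⟩
    · simp
    · intro θ hθm
      simp [intervalIntegral.integral_const]
      ring
  -- Worst case of the lottery
  have hLval : worstScreen F μ (fun _ => Q) (fun _ => 0) = μ * θlow * Q := by
    apply le_antisymm (hi _ _ hfeasL)
    apply le_csInf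
    · exact ⟨_, ⟨fun _ => μ, ⟨measurable_const, fun _ => hμ.le, by simp⟩, rfl⟩⟩
    · rintro x ⟨m, hm, rfl⟩
      have hb : ∀ᵐ θ ∂F, ‖θ * Q - 0‖ ≤ (|θlow| + |θhigh|) * Q := by
        filter_upwards [haeIcc] with θ hθm
        rw [sub_zero, Real.norm_eq_abs, abs_mul, abs_of_pos hQ0]
        apply mul_le_mul_of_nonneg_right _ hQ0.le
        rw [abs_le]
        constructor
        · nlinarith [le_abs_self θlow, le_abs_self θhigh, neg_abs_le θlow, hθm.1, hθm.2,
            abs_nonneg θlow, abs_nonneg θhigh]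
        · nlinarith [le_abs_self θhigh, hθm.2, abs_nonneg θlow]
      have hc : ∀ᵐ θ ∂F, θlow * Q ≤ θ * Q - 0 := by
        filter_upwards [haeIcc] with θ hθm
        nlinarith [hθm.1]
      have hmeas : AEStronglyMeasurable (fun θ : ℝ => θ * Q - 0) F :=
        ((continuous_id.mul continuous_const).sub continuous_const).aestronglyMeasurable
      have := integral_lower_bound F μ hμ (fun θ => θ * Q - 0) (θlow * Q)
        ((|θlow| + |θhigh|) * Q) hmeas hb hc hm
      calc μ * θlow * Q = μ * (θlow * Q) := by ring
        _ ≤ ∫ θ, m θ * (θ * Q - 0) ∂F := this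
        _ = ∫ θ, m θ * (θ * (fun _ : ℝ => Q) θ - (fun _ : ℝ => (0:ℝ)) θ) ∂F := rfl
  refine ⟨hi, ⟨hfeasL, hLval⟩, ?_⟩
  -- Part (iii)
  intro hpos q t hfeas heq
  obtain ⟨h1, h2, h3, h4⟩ :=
    screen_chain θlow θhigh μ Q hθlow hθ hμ F f hf_cont hf_pos hF q t hfeas
  have hcap := hfeas.2.2.1
  have e1 : μ * θlow * Q ≤ μ * (θlow * q θlow) := heq ▸ h1
  have hq0 : Q ≤ q θlow := by nlinarith [mul_pos hμ hpos]
  have hQint : ∫ θ, q θ ∂F = Q := le_antisymm hcap (le_trans hq0 h2)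
  have hgint : Integrable (fun θ => q θ - Q) F := h4.sub (integrable_const _)
  have hgnn : 0 ≤ᵐ[F] fun θ => q θ - Q := by
    filter_upwards [h3] with θ hθm
    simp only [Pi.zero_apply]
    linarith
  have hg0 : ∫ θ, (q θ - Q) ∂F = 0 := by
    rw [integral_sub h4 (integrable_const _), hQint]
    simp
  have := (integral_eq_zero_iff_of_nonneg_ae hgnn hgint).mp hg0
  filter_upwards [this] with θ hθm
  have : q θ - Q = 0 := hθm
  linarith
end
end
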